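/- arXiv:1701.06064 — 8 statements merged into one kernel-verified Lean document; each statement's English description precedes it below -/
import Mathlib

section
/- Let n, p, k be integers with 1 ≤ p ≤ n and 0 ≤ k ≤ p, let x ∈ Φ, and let c ∈ ℝ^n with c_i ≥ 0 for all i. Then for every α ∈ ℝ and every β ≥ 0, p·α + (p−k)·β − Σ_{i=1}^n [α + β·x_i − c_i]_+ ≤ min_{y ∈ Φ^k_x} Σ_{i=1}^n c_i·y_i (weak LP duality for the incremental recoverable selection problem). -/
open Finset

noncomputable section

/-- The set of feasible selections: 0-1 vectors with exactly `p` ones. -/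
def selPhi (n p : ℕ) : Set (Fin n → ℝ) :=
  {x | (∀ i, x i = 0 ∨ x i = 1) ∧ (∑ i, x i) = (p : ℝ)}

/-- The recovery set `Φ^k_x`. -/
def selPhiK (n p k : ℕ) (x : Fin n → ℝ) : Set (Fin n → ℝ) :=
  {y | (∀ i, y i = 0 ∨ y i = 1) ∧ (∑ i, y i) = (p : ℝ) ∧
    (p : ℝ) - (k : ℝ) ≤ ∑ i, x i * y i}

/-- The continuous budgeted uncertainty set `U^c`. -/
def Uc (n : ℕ) (cl d : Fin n → ℝ) (Γ : ℝ) : Set (Fin n → ℝ) :=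
  {c | ∃ δ : Fin n → ℝ, (∀ i, 0 ≤ δ i ∧ δ i ≤ d i) ∧ (∑ i, δ i) ≤ Γ ∧
    c = fun i => cl i + δ i}

/-- The optimal value `min_{y ∈ S} Σ c_i y_i` of the incremental problem. -/
def incVal (n : ℕ) (S : Set (Fin n → ℝ)) (c : Fin n → ℝ) : ℝ :=
  sInf {v | ∃ y ∈ S, v = ∑ i, c i * y i}

/-
The left-hand side is the LP dual objective at `(α, β, γ)` with `γ_i = [α + β x_i - c_i]_+`.
For a 0-1 value `y_i` one has `(α + β x_i) y_i - γ_i ≤ c_i y_i`; summing over `i` and using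
`Σ y_i = p` and `Σ x_i y_i ≥ p - k` (with `β ≥ 0`) bounds it by `Σ c_i y_i` for every
`y ∈ Φ^k_x`, and `x` itself lies in `Φ^k_x`, so the infimum is over a nonempty set.
-/

lemma mul_sub_max_sub_le_mul_of_zero_or_one {a c y : ℝ} (hy : y = 0 ∨ y = 1) :
    a * y - max (a - c) 0 ≤ c * y := by
  rcases hy with rfl | rfl
  · simp
  · linarith [le_max_left (a - c) 0, mul_one a, mul_one c]

lemma self_mem_selPhiK {n p k : ℕ} {x : Fin n → ℝ} (hx : x ∈ selPhi n p) :
    x ∈ selPhiK n p k x := by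
  obtain ⟨hx01, hxsum⟩ := hx
  have hsq : ∑ i, x i * x i = ∑ i, x i :=
    sum_congr rfl fun i _ => by rcases hx01 i with h | h <;> simp [h]
  refine ⟨hx01, hxsum, ?_⟩
  rw [hsq, hxsum]
  linarith [(k.cast_nonneg : (0 : ℝ) ≤ k)]

lemma dual_objective_le_of_mem_selPhiK {n p k : ℕ} {x y c : Fin n → ℝ}
    (hy : y ∈ selPhiK n p k x) {α β : ℝ} (hβ : 0 ≤ β) :
    (p : ℝ) * α + ((p : ℝ) - (k : ℝ)) * β - ∑ i, max (α + β * x i - c i) 0 ≤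
      ∑ i, c i * y i := by
  obtain ⟨hy01, hysum, hxy⟩ := hy
  have hpointwise : ∑ i, ((α + β * x i) * y i - max (α + β * x i - c i) 0) ≤ ∑ i, c i * y i :=
    sum_le_sum fun i _ => mul_sub_max_sub_le_mul_of_zero_or_one (hy01 i)
  have hexpand : ∑ i, ((α + β * x i) * y i - max (α + β * x i - c i) 0)
      = α * ∑ i, y i + β * ∑ i, x i * y i - ∑ i, max (α + β * x i - c i) 0 := by
    rw [sum_sub_distrib, mul_sum, mul_sum, ← sum_add_distrib]
    congr 1
    exact sum_congr rfl fun i _ => by ring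
  rw [hexpand, hysum] at hpointwise
  linarith [mul_le_mul_of_nonneg_left hxy hβ]

theorem stmt0_general (n p k : ℕ)
    (x : Fin n → ℝ) (hx : x ∈ selPhi n p)
    (c : Fin n → ℝ)
    (α β : ℝ) (hβ : 0 ≤ β) :
    (p : ℝ) * α + ((p : ℝ) - (k : ℝ)) * β - ∑ i, max (α + β * x i - c i) 0 ≤
      incVal n (selPhiK n p k x) c := by
  refine le_csInf ⟨∑ i, c i * x i, x, self_mem_selPhiK hx, rfl⟩ ?_
  rintro v ⟨y, hy, rfl⟩
  exact dual_objective_le_of_mem_selPhiK hy hβ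

/-- Weak LP duality for the incremental recoverable selection problem. -/
theorem stmt0 (n p k : ℕ) (hp1 : 1 ≤ p) (hpn : p ≤ n) (hk : k ≤ p)
    (x : Fin n → ℝ) (hx : x ∈ selPhi n p)
    (c : Fin n → ℝ) (hc : ∀ i, 0 ≤ c i)
    (α β : ℝ) (hβ : 0 ≤ β) :
    (p : ℝ) * α + ((p : ℝ) - (k : ℝ)) * β - ∑ i, max (α + β * x i - c i) 0 ≤
      incVal n (selPhiK n p k x) c :=
  stmt0_general n p k x hx c α β hβ
end
end

section
/- Let n, p, k be integers with 1 ≤ k < p ≤ n and k ≤ n−p, let x ∈ Φ, and let c̲, d ∈ ℝ^n with c̲_i ≥ 0 and d_i ≥ 0 for all i, and Γ ≥ 0. Then there exists a worst-case scenario c* ∈ U^c, i.e. one attaining max_{c ∈ U^c} min_{y ∈ Φ^k_x} Σ_i c_i·y_i, such that either b₁(c*) ≤ b(c*), or b₁(c*) ∈ D, or b₂(c*) ∈ D, where D = {c̲_1,…,c̲_n} ∪ {c̲_1+d_1,…,c̲_n+d_n}. -/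
open Finset

noncomputable section

/-- The `j`-th smallest value (1-indexed) among the multiset `{c i : i ∈ s}`. -/
def kthSmallest (n : ℕ) (s : Finset (Fin n)) (c : Fin n → ℝ) (j : ℕ) : ℝ :=
  (Multiset.sort (s.1.map c) (· ≤ ·)).getD (j - 1) 0

/-!
Let `G c` be the optimal recovery cost, a minimum of finitely many linear functions of `c`, and
let `c*` maximize `G` on the compact set `U^c` and, among those maximizers, maximize the cost
`∑_{i ∈ X_x} c_i` of the first-stage solution. Suppose `b(c*) < b₁(c*)` and `b₁(c*), b₂(c*) ∉ D`.
By an exchange argument every optimal recovery `Y` then takes exactly `p - k` items of `X_x`, all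
those cheaper than `b₁` and some of cost `b₁`, and `k` items outside `X_x`, all those cheaper than
`b₂` and some of cost `b₂`. Hence, with `R` the items of `X_x` of cost `b₁` and `S` the items
outside of cost `b₂`, the numbers `|Y ∩ R|` and `|Y ∩ S|` do not depend on the optimal `Y`.
No cost in `R ∪ S` sits at an end of its interval, so the budget-neutral move
`c* + ε (|R| 1_S - |S| 1_R)` stays in `U^c` for small `|ε|`, changes `G` by `ε u` with `u`
independent of `Y`, and changes the first-stage cost by `-ε |R| |S|`. A suitable sign of `ε` either
raises `G` (if `u ≠ 0`) or keeps `G` and raises the first-stage cost (if `u = 0`).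
-/

open Filter Topology

section ListOrder

variable {α : Type*} [LinearOrder α] {l : List α} {t : ℕ}

theorem List.Pairwise.countP_lt_getElem_le (hl : l.Pairwise (· ≤ ·)) (ht : t < l.length) :
    l.countP (· < l[t]) ≤ t := by
  set a := l[t]
  have hsplit : l = l.take t ++ a :: l.drop (t + 1) := by simp [a]
  rw [hsplit, List.pairwise_append, List.pairwise_cons] at hl
  have hdrop : (l.drop (t + 1)).countP (· < a) = 0 :=
    List.countP_eq_zero.2 fun b hb => by simpa using hl.2.1.1 b hb
  rw [hsplit, List.countP_append, List.countP_cons, hdrop]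
  simpa using (List.countP_le_length (l := l.take t)).trans (List.length_take_le t l)

theorem List.Pairwise.succ_le_countP_le_getElem (hl : l.Pairwise (· ≤ ·)) (ht : t < l.length) :
    t + 1 ≤ l.countP (· ≤ l[t]) := by
  set a := l[t]
  have hsplit : l = l.take t ++ a :: l.drop (t + 1) := by simp [a]
  rw [hsplit, List.pairwise_append] at hl
  have htake : (l.take t).countP (· ≤ a) = t := by
    rw [List.countP_eq_length.2 fun b hb => by simpa using hl.2.2 b hb a List.mem_cons_self]
    simp [ht.le]
  rw [hsplit, List.countP_append, List.countP_cons, htake]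
  simp

end ListOrder

section OrderStatistic

variable {n : ℕ} (s : Finset (Fin n)) (c : Fin n → ℝ) {j : ℕ}

theorem card_filter_eq_countP_sort (P : ℝ → Prop) [DecidablePred P] :
    #(s.filter fun i => P (c i)) = (Multiset.sort (s.1.map c) (· ≤ ·)).countP (P ·) := by
  rw [← Multiset.coe_countP, Multiset.sort_eq, Multiset.countP_map]
  rfl

theorem kthSmallest_eq_getElem (hj : 0 < j) (hjs : j ≤ #s) :
    ∃ h : j - 1 < (Multiset.sort (s.1.map c) (· ≤ ·)).length,
      kthSmallest n s c j = (Multiset.sort (s.1.map c) (· ≤ ·))[j - 1] := by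
  have h : j - 1 < (Multiset.sort (s.1.map c) (· ≤ ·)).length := by
    rw [Multiset.length_sort, Multiset.card_map]
    exact lt_of_lt_of_le (Nat.sub_lt hj one_pos) hjs
  exact ⟨h, List.getD_eq_getElem _ _ h⟩

theorem exists_mem_eq_kthSmallest (hj : 0 < j) (hjs : j ≤ #s) :
    ∃ i ∈ s, c i = kthSmallest n s c j := by
  obtain ⟨h, he⟩ := kthSmallest_eq_getElem s c hj hjs
  obtain ⟨i, hi, hci⟩ := Multiset.mem_map.1 ((Multiset.mem_sort _).1 (List.getElem_mem h))
  exact ⟨i, hi, hci.trans he.symm⟩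

theorem card_filter_lt_kthSmallest_lt (hj : 0 < j) (hjs : j ≤ #s) :
    #(s.filter fun i => c i < kthSmallest n s c j) < j := by
  obtain ⟨h, he⟩ := kthSmallest_eq_getElem s c hj hjs
  rw [card_filter_eq_countP_sort s c (· < kthSmallest n s c j), he]
  have := (Multiset.pairwise_sort _ _).countP_lt_getElem_le h
  omega

theorem le_card_filter_le_kthSmallest (hj : 0 < j) (hjs : j ≤ #s) :
    j ≤ #(s.filter fun i => c i ≤ kthSmallest n s c j) := by
  obtain ⟨h, he⟩ := kthSmallest_eq_getElem s c hj hjs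
  rw [card_filter_eq_countP_sort s c (· ≤ kthSmallest n s c j), he]
  have := (Multiset.pairwise_sort _ _).succ_le_countP_le_getElem h
  omega

end OrderStatistic

section Exchange

variable {α : Type*} [DecidableEq α] (c : α → ℝ)

theorem le_of_isMinOn_of_insert_erase_mem {F : Finset (Finset α)} {Y : Finset α}
    (hmin : IsMinOn (fun Z => ∑ i ∈ Z, c i) (F : Set (Finset α)) Y) {i j : α} (hi : i ∈ Y)
    (hj : j ∉ Y) (hswap : insert j (Y.erase i) ∈ F) : c i ≤ c j := by
  have := isMinOn_iff.1 hmin _ hswap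
  rw [sum_insert fun h => hj (mem_of_mem_erase h), sum_erase_eq_sub hi] at this
  linarith

theorem card_filter_lt_add_card_filter_eq {W A : Finset α} {m : ℕ} {β : ℝ} (hAW : A ⊆ W)
    (hA : #A = m) (hlt : #(W.filter (c · < β)) < m) (hle : m ≤ #(W.filter (c · ≤ β)))
    (hex : ∀ i ∈ A, ∀ j ∈ W, j ∉ A → c i ≤ c j) :
    #(W.filter (c · < β)) + #(A.filter (c · = β)) = m := by
  have hltA : W.filter (c · < β) ⊆ A := by
    intro j hj
    by_contra hjA
    rw [mem_filter] at hj
    have hsub : insert j A ⊆ W.filter (c · < β) := insert_subset (mem_filter.2 hj)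
      fun i hi => mem_filter.2 ⟨hAW hi, (hex i hi j hj.1 hjA).trans_lt hj.2⟩
    have := card_le_card hsub
    rw [card_insert_of_notMem hjA] at this
    omega
  have hAle : ∀ i ∈ A, c i ≤ β := by
    intro i hi
    by_contra! hβ
    have hsub : W.filter (c · ≤ β) ⊆ A.erase i := fun j hj => by
      rw [mem_filter] at hj
      have hij : c j < c i := hj.2.trans_lt hβ
      have hjA : j ∈ A := by
        by_contra hjA
        exact (hex i hi j hj.1 hjA).not_gt hij
      exact mem_erase.2 ⟨fun h => hij.ne (congrArg c h), hjA⟩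
    have := card_le_card hsub
    rw [card_erase_of_mem hi] at this
    omega
  have hlt_eq : A.filter (c · < β) = W.filter (c · < β) :=
    Subset.antisymm (filter_subset_filter _ hAW) fun j hj =>
      mem_filter.2 ⟨hltA hj, (mem_filter.1 hj).2⟩
  have hnlt_eq : A.filter (¬ c · < β) = A.filter (c · = β) :=
    filter_congr fun i hi => ⟨fun h => le_antisymm (hAle i hi) (not_lt.1 h), fun h => h.ge.not_gt⟩
  rw [← hlt_eq, ← hnlt_eq, card_filter_add_card_filter_not, hA]

variable [Fintype α]

def recoveryFamily (p k : ℕ) (X : Finset α) : Finset (Finset α) :=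
  univ.filter fun Y => #Y = p ∧ p - k ≤ #(Y ∩ X)

variable {p k : ℕ} {X Y : Finset α}

theorem insert_erase_mem_recoveryFamily (hY : Y ∈ recoveryFamily p k X) {i j : α} (hi : i ∈ Y)
    (hj : j ∉ Y) (hX : i ∈ X → j ∉ X → p - k < #(Y ∩ X)) :
    insert j (Y.erase i) ∈ recoveryFamily p k X := by
  simp only [recoveryFamily, mem_filter, mem_univ, true_and] at hY ⊢
  have hjY : j ∉ Y.erase i := fun h => hj (mem_of_mem_erase h)
  constructor
  · have := card_pos.2 ⟨i, hi⟩
    rw [card_insert_of_notMem hjY, card_erase_of_mem hi, hY.1]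
    omega
  by_cases hjX : j ∈ X
  · rw [insert_inter_of_mem hjX, card_insert_of_notMem fun h => hjY (mem_of_mem_inter_left h),
      erase_inter]
    have := pred_card_le_card_erase (s := Y ∩ X) (a := i)
    omega
  · rw [insert_inter_of_notMem hjX, erase_inter, card_erase_eq_ite]
    split_ifs with hiYX
    · have := hX (mem_inter.1 hiYX).2 hjX
      omega
    · exact hY.2

end Exchange

section Minimizer

variable {α : Type*} [DecidableEq α] [Fintype α] {c : α → ℝ} {p k : ℕ} {X Y : Finset α}

theorem le_of_isMinOn_of_mem_iff (hY : Y ∈ recoveryFamily p k X)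
    (hmin : IsMinOn (fun Z => ∑ i ∈ Z, c i) (recoveryFamily p k X : Set (Finset α)) Y)
    {i j : α} (hi : i ∈ Y) (hj : j ∉ Y) (hij : i ∈ X ↔ j ∈ X) : c i ≤ c j :=
  le_of_isMinOn_of_insert_erase_mem c hmin hi hj
    (insert_erase_mem_recoveryFamily hY hi hj fun hiX hjX => absurd (hij.1 hiX) hjX)

theorem card_inter_eq_of_isMinOn (hY : Y ∈ recoveryFamily p k X)
    (hmin : IsMinOn (fun Z => ∑ i ∈ Z, c i) (recoveryFamily p k X : Set (Finset α)) Y) {β : ℝ}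
    (hlt : #(X.filter (c · < β)) < p - k) (hcross : k < #(Xᶜ.filter (c · < β))) :
    #(Y ∩ X) = p - k := by
  have hYX := hY
  simp only [recoveryFamily, mem_filter, mem_univ, true_and] at hYX
  by_contra hne
  have hgt : p - k < #(Y ∩ X) := lt_of_le_of_ne hYX.2 (Ne.symm hne)
  have hsplit := card_inter_add_card_sdiff Y X
  rw [sdiff_eq_inter_compl] at hsplit
  obtain ⟨j, hj, hjY⟩ := exists_mem_notMem_of_card_lt_card
    (s := Y ∩ Xᶜ) (t := Xᶜ.filter (c · < β)) (by omega)
  rw [mem_filter] at hj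
  have hsub : Y ∩ X ⊆ X.filter (c · < β) := fun i hi => by
    rw [mem_inter] at hi
    refine mem_filter.2 ⟨hi.2, lt_of_le_of_lt ?_ hj.2⟩
    exact le_of_isMinOn_of_insert_erase_mem c hmin hi.1
      (fun h => hjY (mem_inter.2 ⟨h, hj.1⟩))
      (insert_erase_mem_recoveryFamily hY hi.1 (fun h => hjY (mem_inter.2 ⟨h, hj.1⟩))
        fun _ _ => hgt)
  have := card_le_card hsub
  omega

end Minimizer

section Structure

variable {n p k : ℕ} {X Y : Finset (Fin n)} {c : Fin n → ℝ}

theorem lt_card_compl_filter_lt (hkp : k < p) (hpn : p ≤ n) {β : ℝ}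
    (hb : kthSmallest n univ c p < β) (hβ : #(X.filter (c · < β)) < p - k) :
    k < #(Xᶜ.filter (c · < β)) := by
  have hp := le_card_filter_le_kthSmallest univ c (j := p) (by omega) (by simpa using hpn)
  have hsub : univ.filter (c · ≤ kthSmallest n univ c p) ⊆
      X.filter (c · < β) ∪ Xᶜ.filter (c · < β) := by
    rw [← filter_union, union_compl]
    exact monotone_filter_right _ fun i _ (hi : c i ≤ _) => hi.trans_lt hb
  have := (card_le_card hsub).trans (card_union_le _ _)
  omega

theorem card_filter_lt_add_card_inter_filter_eq_of_isMinOn (hk : 0 < k) (hkp : k < p)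
    (hpn : p ≤ n) (hknp : k ≤ n - p) (hX : #X = p)
    (hb : kthSmallest n univ c p < kthSmallest n X c (p - k))
    (hY : Y ∈ recoveryFamily p k X)
    (hmin : IsMinOn (fun Z => ∑ i ∈ Z, c i) (recoveryFamily p k X : Set (Finset (Fin n))) Y) :
    #(X.filter (c · < kthSmallest n X c (p - k))) +
        #(Y ∩ X.filter (c · = kthSmallest n X c (p - k))) = p - k ∧
      #(Xᶜ.filter (c · < kthSmallest n Xᶜ c k)) +
        #(Y ∩ Xᶜ.filter (c · = kthSmallest n Xᶜ c k)) = k := by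
  have hXc : #Xᶜ = n - p := by rw [card_compl, hX, Fintype.card_fin]
  have hlt₁ := card_filter_lt_kthSmallest_lt X c (j := p - k) (by omega) (by omega)
  have hle₁ := le_card_filter_le_kthSmallest X c (j := p - k) (by omega) (by omega)
  have hlt₂ := card_filter_lt_kthSmallest_lt Xᶜ c (j := k) hk (by omega)
  have hle₂ := le_card_filter_le_kthSmallest Xᶜ c (j := k) hk (by omega)
  have hYX := card_inter_eq_of_isMinOn hY hmin hlt₁ (lt_card_compl_filter_lt hkp hpn hb hlt₁)
  have hYXc : #(Y ∩ Xᶜ) = k := by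
    have hsplit := card_inter_add_card_sdiff Y X
    rw [sdiff_eq_inter_compl] at hsplit
    simp only [recoveryFamily, mem_filter] at hY
    omega
  rw [inter_filter, inter_filter]
  constructor
  · refine card_filter_lt_add_card_filter_eq c inter_subset_right hYX hlt₁ hle₁
      fun i hi j hj hjA => ?_
    exact le_of_isMinOn_of_mem_iff hY hmin (mem_inter.1 hi).1
      (fun hjY => hjA (mem_inter.2 ⟨hjY, hj⟩)) (iff_of_true (mem_inter.1 hi).2 hj)
  · refine card_filter_lt_add_card_filter_eq c inter_subset_right hYXc hlt₂ hle₂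
      fun i hi j hj hjA => ?_
    exact le_of_isMinOn_of_mem_iff hY hmin (mem_inter.1 hi).1
      (fun hjY => hjA (mem_inter.2 ⟨hjY, hj⟩))
      (iff_of_false (mem_compl.1 (mem_inter.1 hi).2) (mem_compl.1 hj))

end Structure

section ZeroOne

variable {n p k : ℕ}

theorem eq_ite_mem_filter_of_zero_or_one {y : Fin n → ℝ} (hy : ∀ i, y i = 0 ∨ y i = 1) :
    y = fun i => if i ∈ univ.filter (y · = 1) then 1 else 0 := by
  ext i
  rcases hy i with h | h <;> simp [h]

theorem ite_mem_mem_selPhiK_iff (hk : k ≤ p) (X Y : Finset (Fin n)) :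
    (fun i => if i ∈ Y then (1 : ℝ) else 0) ∈ selPhiK n p k (fun i => if i ∈ X then 1 else 0) ↔
      Y ∈ recoveryFamily p k X := by
  simp [selPhiK, recoveryFamily, ← Nat.cast_sub hk, inter_comm, em']

theorem sum_mul_ite_mem (c : Fin n → ℝ) (Y : Finset (Fin n)) :
    ∑ i, c i * (if i ∈ Y then 1 else 0) = ∑ i ∈ Y, c i := by
  simp

theorem incVal_selPhiK_eq_inf' {x : Fin n → ℝ} (hx : x ∈ selPhi n p) (hk : k ≤ p)
    (hF : (recoveryFamily p k (univ.filter (x · = 1))).Nonempty) (c : Fin n → ℝ) :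
    incVal n (selPhiK n p k x) c =
      (recoveryFamily p k (univ.filter (x · = 1))).inf' hF fun Y => ∑ i ∈ Y, c i := by
  have hx₁ := eq_ite_mem_filter_of_zero_or_one hx.1
  rw [incVal, inf'_eq_csInf_image]
  congr 1
  ext v
  constructor
  · rintro ⟨y, hy, rfl⟩
    obtain ⟨Y, rfl⟩ : ∃ Y : Finset (Fin n), y = fun i => if i ∈ Y then 1 else 0 :=
      ⟨_, eq_ite_mem_filter_of_zero_or_one hy.1⟩
    rw [hx₁, ite_mem_mem_selPhiK_iff hk] at hy
    exact ⟨_, hy, (sum_mul_ite_mem c _).symm⟩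
  · rintro ⟨Y, hY, rfl⟩
    refine ⟨fun i => if i ∈ Y then 1 else 0, ?_, (sum_mul_ite_mem c Y).symm⟩
    rw [hx₁, ite_mem_mem_selPhiK_iff hk]
    exact hY

end ZeroOne

theorem eventually_inf'_add_mul_eq {ι : Type*} {T : Finset ι} (hT : T.Nonempty) {f g : ι → ℝ}
    {u : ℝ} (hg : ∀ Y ∈ T, f Y = T.inf' hT f → g Y = u) :
    ∀ᶠ ε in 𝓝 (0 : ℝ), T.inf' hT (fun Y => f Y + ε * g Y) = T.inf' hT f + ε * u := by
  have hY : ∀ Y ∈ T, ∀ᶠ ε in 𝓝 (0 : ℝ), T.inf' hT f + ε * u ≤ f Y + ε * g Y := by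
    intro Y hY
    rcases (inf'_le f hY).eq_or_lt with hmin | hlt
    · exact Eventually.of_forall fun ε => by rw [hmin, hg Y hY hmin.symm]
    · have hlt₀ : T.inf' hT f + 0 * u < f Y + 0 * g Y := by simpa only [zero_mul, add_zero]
      exact (ContinuousAt.eventually_lt (by fun_prop) (by fun_prop) hlt₀).mono fun _ => le_of_lt
  obtain ⟨Y₀, hY₀, hf₀⟩ := exists_mem_eq_inf' hT f
  filter_upwards [(eventually_all_finset T).2 hY] with ε hε
  refine le_antisymm ?_ (le_inf' _ _ hε)
  calc T.inf' hT (fun Y => f Y + ε * g Y) ≤ f Y₀ + ε * g Y₀ := inf'_le _ hY₀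
    _ = T.inf' hT f + ε * u := by rw [← hf₀, hg Y₀ hY₀ hf₀.symm]

theorem exists_pos_mul_of_eventually {P : ℝ → Prop} (hP : ∀ᶠ ε in 𝓝 0, P ε) {a : ℝ}
    (ha : a ≠ 0) : ∃ ε, P ε ∧ 0 < ε * a := by
  have hlim : Tendsto (fun t => t * a) (𝓝[>] 0) (𝓝 0) := by
    simpa using (continuous_mul_const a).tendsto' 0 0 (zero_mul a) |>.mono_left nhdsWithin_le_nhds
  obtain ⟨t, hPt, ht⟩ := ((hlim.eventually hP).and self_mem_nhdsWithin).exists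
  exact ⟨t * a, hPt, by rw [mul_assoc]; exact mul_pos ht (mul_self_pos.2 ha)⟩

section LexMax

variable {E : Type*} {K : Set E} {f g : E → ℝ} {x : E}

theorem IsCompact.exists_isMaxOn_lex [TopologicalSpace E] (hK : IsCompact K) (hne : K.Nonempty)
    (hf : Continuous f) (hg : Continuous g) :
    ∃ x ∈ K, IsMaxOn f K x ∧ IsMaxOn g (K ∩ {y | f y = f x}) x := by
  obtain ⟨x₀, hx₀, hmax₀⟩ := hK.exists_isMaxOn hne hf.continuousOn
  obtain ⟨x, ⟨hxK, hfx : f x = f x₀⟩, hmax⟩ :=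
    (hK.inter_right (isClosed_eq hf continuous_const)).exists_isMaxOn ⟨x₀, hx₀, rfl⟩ hg.continuousOn
  refine ⟨x, hxK, fun y hy => ?_, by rwa [hfx]⟩
  exact hfx ▸ hmax₀ hy

theorem not_eventually_of_isMaxOn_lex [AddCommGroup E] [Module ℝ E] (hf : IsMaxOn f K x)
    (hg : IsMaxOn g (K ∩ {y | f y = f x}) x) {v : E} {u w : ℝ} (hw : w ≠ 0) :
    ¬ ∀ᶠ ε in 𝓝 (0 : ℝ), x + ε • v ∈ K ∧ f (x + ε • v) = f x + ε * u ∧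
      g (x + ε • v) = g x + ε * w := by
  intro h
  by_cases hu : u = 0
  · obtain ⟨ε, ⟨hK, hfε, hgε⟩, hpos⟩ := exists_pos_mul_of_eventually h hw
    have := isMaxOn_iff.1 hg _ ⟨hK, by simp [hfε, hu]⟩
    linarith
  · obtain ⟨ε, ⟨hK, hfε, -⟩, hpos⟩ := exists_pos_mul_of_eventually h hu
    have := isMaxOn_iff.1 hf _ hK
    linarith

end LexMax

section Budgeted

variable {n : ℕ} {cl d c : Fin n → ℝ} {Γ : ℝ}

theorem isCompact_Uc : IsCompact (Uc n cl d Γ) := by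
  have hUc : Uc n cl d Γ = (cl + ·) '' (Set.Icc 0 d ∩ {δ | ∑ i, δ i ≤ Γ}) := by
    ext c
    simp only [Uc, Set.mem_image, Set.mem_inter_iff, Set.mem_Icc, Set.mem_ofPred_eq,
      Pi.le_def, forall_and]
    constructor
    · rintro ⟨δ, ⟨h0, hd⟩, hΓ, rfl⟩
      exact ⟨δ, ⟨⟨h0, hd⟩, hΓ⟩, rfl⟩
    · rintro ⟨δ, ⟨⟨h0, hd⟩, hΓ⟩, rfl⟩
      exact ⟨δ, ⟨h0, hd⟩, hΓ, rfl⟩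
  rw [hUc]
  refine (isCompact_Icc.inter_right (isClosed_le (by fun_prop) continuous_const)).image ?_
  fun_prop

theorem Uc_nonempty (hd : ∀ i, 0 ≤ d i) (hΓ : 0 ≤ Γ) : (Uc n cl d Γ).Nonempty :=
  ⟨cl, 0, fun i => ⟨le_rfl, hd i⟩, by simpa using hΓ, by simp⟩

theorem lt_and_lt_of_mem_Uc (hc : c ∈ Uc n cl d Γ) {i : Fin n}
    (hi : c i ∉ Set.range cl ∪ Set.range (fun i => cl i + d i)) :
    cl i < c i ∧ c i < cl i + d i := by
  obtain ⟨δ, hδ, -, rfl⟩ := hc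
  simp only [Set.mem_union, Set.mem_range, not_or, not_exists] at hi
  exact ⟨lt_of_le_of_ne (by linarith [(hδ i).1]) fun h => hi.1 i h,
    lt_of_le_of_ne (by linarith [(hδ i).2]) fun h => hi.2 i h.symm⟩

theorem eventually_add_smul_mem_Uc (hc : c ∈ Uc n cl d Γ) {v : Fin n → ℝ} (hv : ∑ i, v i = 0)
    (hint : ∀ i, v i ≠ 0 → cl i < c i ∧ c i < cl i + d i) :
    ∀ᶠ ε in 𝓝 (0 : ℝ), c + ε • v ∈ Uc n cl d Γ := by
  obtain ⟨δ, hδ, hΓ, rfl⟩ := hc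
  have hδε : ∀ i, ∀ᶠ ε in 𝓝 (0 : ℝ), 0 ≤ δ i + ε * v i ∧ δ i + ε * v i ≤ d i := by
    intro i
    by_cases hvi : v i = 0
    · exact Eventually.of_forall fun ε => by simpa [hvi] using hδ i
    have hlim : Tendsto (fun ε => δ i + ε * v i) (𝓝 0) (𝓝 (δ i)) := by
      simpa using ((tendsto_id (x := 𝓝 (0 : ℝ))).mul_const (v i)).const_add (δ i)
    have h := hint i hvi
    exact ((hlim.eventually_const_lt (by linarith)).and
      (hlim.eventually_lt_const (by linarith))).mono fun _ h => ⟨h.1.le, h.2.le⟩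
  filter_upwards [eventually_all.2 hδε] with ε hε
  refine ⟨δ + ε • v, hε, ?_, ?_⟩
  · simpa [sum_add_distrib, ← mul_sum, hv] using hΓ
  · ext i
    simp only [Pi.add_apply, Pi.smul_apply, smul_eq_mul]
    ring

end Budgeted

section Direction

variable {α : Type*} [DecidableEq α]

def exchangeDirection (R S : Finset α) (i : α) : ℝ :=
  #R * (if i ∈ S then 1 else 0) - #S * (if i ∈ R then 1 else 0)

theorem sum_exchangeDirection (R S Y : Finset α) :
    ∑ i ∈ Y, exchangeDirection R S i = #R * #(Y ∩ S) - #S * #(Y ∩ R) := by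
  simp [exchangeDirection, sum_sub_distrib, mul_comm]

variable {R S : Finset α}

theorem sum_univ_exchangeDirection [Fintype α] : ∑ i, exchangeDirection R S i = 0 := by
  rw [sum_exchangeDirection, univ_inter, univ_inter, mul_comm, sub_self]

theorem sum_exchangeDirection_of_subset_of_disjoint {X : Finset α} (hRX : R ⊆ X)
    (hSX : Disjoint X S) : ∑ i ∈ X, exchangeDirection R S i = -(#S * #R) := by
  rw [sum_exchangeDirection, inter_eq_right.2 hRX, disjoint_iff_inter_eq_empty.1 hSX]
  simp

theorem mem_or_mem_of_exchangeDirection_ne_zero {i : α} (hi : exchangeDirection R S i ≠ 0) :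
    i ∈ R ∨ i ∈ S := by
  by_contra! h
  simp [exchangeDirection, h.1, h.2] at hi

end Direction

theorem exists_improving_direction {n p k : ℕ} (hk : 0 < k) (hkp : k < p) (hpn : p ≤ n)
    (hknp : k ≤ n - p) {X : Finset (Fin n)} (hX : #X = p) (hF : (recoveryFamily p k X).Nonempty)
    {cl d c : Fin n → ℝ} {Γ : ℝ} (hc : c ∈ Uc n cl d Γ)
    (hb : kthSmallest n univ c p < kthSmallest n X c (p - k))
    (hb₁ : kthSmallest n X c (p - k) ∉ Set.range cl ∪ Set.range (fun i => cl i + d i))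
    (hb₂ : kthSmallest n Xᶜ c k ∉ Set.range cl ∪ Set.range (fun i => cl i + d i)) :
    ∃ v : Fin n → ℝ, ∃ u w : ℝ, w ≠ 0 ∧ ∀ᶠ ε in 𝓝 (0 : ℝ), c + ε • v ∈ Uc n cl d Γ ∧
      (recoveryFamily p k X).inf' hF (fun Y => ∑ i ∈ Y, (c + ε • v) i) =
        (recoveryFamily p k X).inf' hF (fun Y => ∑ i ∈ Y, c i) + ε * u ∧
      ∑ i ∈ X, (c + ε • v) i = ∑ i ∈ X, c i + ε * w := by
  set β₁ := kthSmallest n X c (p - k)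
  set β₂ := kthSmallest n Xᶜ c k
  set R := X.filter (c · = β₁)
  set S := Xᶜ.filter (c · = β₂)
  have hXc : #Xᶜ = n - p := by rw [card_compl, hX, Fintype.card_fin]
  obtain ⟨i₁, hi₁, hci₁⟩ := exists_mem_eq_kthSmallest X c (j := p - k) (by omega) (by omega)
  obtain ⟨i₂, hi₂, hci₂⟩ := exists_mem_eq_kthSmallest Xᶜ c (j := k) hk (by omega)
  have hR : 0 < #R := card_pos.2 ⟨i₁, mem_filter.2 ⟨hi₁, hci₁⟩⟩
  have hS : 0 < #S := card_pos.2 ⟨i₂, mem_filter.2 ⟨hi₂, hci₂⟩⟩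
  have hsupp : ∀ i, exchangeDirection R S i ≠ 0 → cl i < c i ∧ c i < cl i + d i :=
    fun i hi => lt_and_lt_of_mem_Uc hc <| by
      rcases mem_or_mem_of_exchangeDirection_ne_zero hi with hi | hi <;> rwa [(mem_filter.1 hi).2]
  set u : ℝ := #R * ((k - #(Xᶜ.filter (c · < β₂)) : ℕ) : ℝ) -
    #S * ((p - k - #(X.filter (c · < β₁)) : ℕ) : ℝ)
  have hcost : ∀ Y ∈ recoveryFamily p k X,
      ∑ i ∈ Y, c i = (recoveryFamily p k X).inf' hF (fun Y => ∑ i ∈ Y, c i) →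
      ∑ i ∈ Y, exchangeDirection R S i = u := by
    intro Y hY hYmin
    obtain ⟨h₁, h₂⟩ : #(X.filter (c · < β₁)) + #(Y ∩ R) = p - k ∧
        #(Xᶜ.filter (c · < β₂)) + #(Y ∩ S) = k :=
      card_filter_lt_add_card_inter_filter_eq_of_isMinOn hk hkp hpn hknp hX hb hY
        (isMinOn_iff.2 fun Z hZ => hYmin ▸ inf'_le _ hZ)
    rw [sum_exchangeDirection, show #(Y ∩ R) = p - k - #(X.filter (c · < β₁)) by omega,
      show #(Y ∩ S) = k - #(Xᶜ.filter (c · < β₂)) by omega]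
  refine ⟨exchangeDirection R S, u, -(#S * #R),
    neg_ne_zero.2 (mul_pos (by exact_mod_cast hS) (by exact_mod_cast hR)).ne', ?_⟩
  have hXsum : ∑ i ∈ X, exchangeDirection R S i = -(#S * #R) :=
    sum_exchangeDirection_of_subset_of_disjoint (filter_subset _ _)
      (disjoint_compl_right.mono_right (filter_subset _ _))
  filter_upwards [eventually_add_smul_mem_Uc hc sum_univ_exchangeDirection hsupp,
    eventually_inf'_add_mul_eq hF hcost] with ε hU hcostε
  refine ⟨hU, by simpa [sum_add_distrib, ← mul_sum] using hcostε, ?_⟩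
  simp [sum_add_distrib, ← mul_sum, hXsum]

theorem card_filter_eq_one_of_mem_selPhi {n p : ℕ} {x : Fin n → ℝ} (hx : x ∈ selPhi n p) :
    #(univ.filter (x · = 1)) = p := by
  have hsum := hx.2
  rw [eq_ite_mem_filter_of_zero_or_one hx.1] at hsum
  simpa using hsum

theorem stmt2_general (n p k : ℕ) (hk1 : 1 ≤ k) (hkp : k < p) (hpn : p ≤ n) (hknp : k ≤ n - p)
    (x : Fin n → ℝ) (hx : x ∈ selPhi n p)
    (cl d : Fin n → ℝ) (hd : ∀ i, 0 ≤ d i)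
    (Γ : ℝ) (hΓ : 0 ≤ Γ) :
    let Xx : Finset (Fin n) := Finset.univ.filter (fun i => x i = 1)
    let b : (Fin n → ℝ) → ℝ := fun c => kthSmallest n Finset.univ c p
    let b1 : (Fin n → ℝ) → ℝ := fun c => kthSmallest n Xx c (p - k)
    let b2 : (Fin n → ℝ) → ℝ := fun c => kthSmallest n Xxᶜ c k
    let D : Set ℝ := Set.range cl ∪ Set.range (fun i => cl i + d i)
    ∃ cstar ∈ Uc n cl d Γ,
      (∀ c ∈ Uc n cl d Γ,
        incVal n (selPhiK n p k x) c ≤ incVal n (selPhiK n p k x) cstar) ∧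
      (b1 cstar ≤ b cstar ∨ b1 cstar ∈ D ∨ b2 cstar ∈ D) := by
  intro Xx b b1 b2 D
  have hX : #Xx = p := card_filter_eq_one_of_mem_selPhi hx
  have hF : (recoveryFamily p k Xx).Nonempty := ⟨Xx, by simp [recoveryFamily, hX]⟩
  set G : (Fin n → ℝ) → ℝ := fun c => (recoveryFamily p k Xx).inf' hF fun Y => ∑ i ∈ Y, c i
  have hG : ∀ c, incVal n (selPhiK n p k x) c = G c := incVal_selPhiK_eq_inf' hx hkp.le hF
  obtain ⟨cstar, hcU, hGmax, hXmax⟩ := isCompact_Uc.exists_isMaxOn_lex (Uc_nonempty hd hΓ)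
    (f := G) (Continuous.finset_inf'_apply hF fun Y _ => by fun_prop)
    (g := fun c => ∑ i ∈ Xx, c i) (by fun_prop)
  refine ⟨cstar, hcU, fun c hc => ?_, ?_⟩
  · rw [hG, hG]
    exact hGmax hc
  by_contra! h
  obtain ⟨v, u, w, hw, hv⟩ := exists_improving_direction hk1 hkp hpn hknp hX hF hcU h.1 h.2.1 h.2.2
  exact not_eventually_of_isMaxOn_lex hGmax hXmax hw hv

/-- There is a worst-case scenario in `U^c` with the structure of Proposition 2. -/
theorem stmt2 (n p k : ℕ) (hk1 : 1 ≤ k) (hkp : k < p) (hpn : p ≤ n) (hknp : k ≤ n - p)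
    (x : Fin n → ℝ) (hx : x ∈ selPhi n p)
    (cl d : Fin n → ℝ) (hcl : ∀ i, 0 ≤ cl i) (hd : ∀ i, 0 ≤ d i)
    (Γ : ℝ) (hΓ : 0 ≤ Γ) :
    let Xx : Finset (Fin n) := Finset.univ.filter (fun i => x i = 1)
    let b : (Fin n → ℝ) → ℝ := fun c => kthSmallest n Finset.univ c p
    let b1 : (Fin n → ℝ) → ℝ := fun c => kthSmallest n Xx c (p - k)
    let b2 : (Fin n → ℝ) → ℝ := fun c => kthSmallest n Xxᶜ c k
    let D : Set ℝ := Set.range cl ∪ Set.range (fun i => cl i + d i)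
    ∃ cstar ∈ Uc n cl d Γ,
      (∀ c ∈ Uc n cl d Γ,
        incVal n (selPhiK n p k x) c ≤ incVal n (selPhiK n p k x) cstar) ∧
      (b1 cstar ≤ b cstar ∨ b1 cstar ∈ D ∨ b2 cstar ∈ D) :=
  stmt2_general n p k hk1 hkp hpn hknp x hx cl d hd Γ hΓ
end
end

section
/- Let n be a positive integer, a ∈ ℝ^n, d ∈ ℝ^n with d_i ≥ 0 for all i, and Γ ≥ 0. Then min { Σ_{i=1}^n [a_i − δ_i]_+ : 0 ≤ δ_i ≤ d_i for all i, Σ_{i=1}^n δ_i ≤ Γ } = max { Σ_{i=1}^n [a_i]_+ − Γ, Σ_{i=1}^n [a_i − d_i]_+ }. -/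
/-!
Write `c_i = min(d_i, [a_i]_+)` for the part of `d_i` that actually lowers `[a_i − δ_i]_+`, and
`S = Σ c_i`. Every feasible `δ` loses at most `δ_i` per coordinate and never goes below
`[a_i − d_i]_+`, which gives the lower bound. Conversely, reducing every coordinate by the same
fraction `t` of `c_i`, with `t S = min(S, Γ)`, is feasible and attains
`Σ [a_i]_+ − min(S, Γ)`, which is the claimed maximum since `Σ [a_i]_+ − S = Σ [a_i − d_i]_+`.
-/

open Finset

section PositivePart

variable {α : Type*} [AddCommGroup α] [LinearOrder α] [IsOrderedAddMonoid α]

theorem max_zero_sub_le_max_sub_zero {x t : α} (ht : 0 ≤ t) : max x 0 - t ≤ max (x - t) 0 := by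
  rw [← max_sub_sub_right, zero_sub]
  exact max_le_max le_rfl (neg_nonpos.2 ht)

theorem max_sub_zero_of_le_max_zero {x t : α} (ht : 0 ≤ t) (htx : t ≤ max x 0) :
    max (x - t) 0 = max x 0 - t := by
  rcases le_total x 0 with hx | hx
  · obtain rfl : t = 0 := le_antisymm (by rwa [max_eq_right hx] at htx) ht
    simp
  · rw [max_eq_left hx] at htx ⊢
    exact max_eq_left (sub_nonneg.2 htx)

theorem max_zero_sub_min_max_zero {x y : α} (hy : 0 ≤ y) :
    max x 0 - min y (max x 0) = max (x - y) 0 := by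
  rcases le_total y (max x 0) with hyx | hxy
  · rw [min_eq_left hyx, max_sub_zero_of_le_max_zero hy hyx]
  · rw [min_eq_right hxy, sub_self, eq_comm, max_eq_right]
    exact sub_nonpos.2 ((le_max_left x 0).trans hxy)

end PositivePart

theorem exists_mul_eq_min {S Γ : ℝ} (hΓ : 0 ≤ Γ) :
    ∃ t, 0 ≤ t ∧ t ≤ 1 ∧ t * S = min S Γ := by
  rcases le_or_gt S Γ with hSΓ | hΓS
  · exact ⟨1, zero_le_one, le_rfl, by rw [one_mul, min_eq_left hSΓ]⟩
  · have hS : 0 < S := hΓ.trans_lt hΓS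
    refine ⟨Γ / S, div_nonneg hΓ hS.le, (div_le_one hS).2 hΓS.le, ?_⟩
    rw [div_mul_cancel₀ _ hS.ne', min_eq_right hΓS.le]

section BudgetedReduction

variable {ι : Type*} (a d : ι → ℝ)

noncomputable def usefulReduction (i : ι) : ℝ := min (d i) (max (a i) 0)

variable {a d}

theorem usefulReduction_nonneg (hd : ∀ i, 0 ≤ d i) (i : ι) : 0 ≤ usefulReduction a d i :=
  le_min (hd i) (le_max_right _ _)

variable [Fintype ι]

theorem sum_max_zero_sub_sum_usefulReduction (hd : ∀ i, 0 ≤ d i) :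
    ∑ i, max (a i) 0 - ∑ i, usefulReduction a d i = ∑ i, max (a i - d i) 0 := by
  rw [← sum_sub_distrib]
  exact sum_congr rfl fun i _ => max_zero_sub_min_max_zero (hd i)

theorem sum_max_sub_mul_usefulReduction (hd : ∀ i, 0 ≤ d i) {t : ℝ} (ht₀ : 0 ≤ t) (ht₁ : t ≤ 1) :
    ∑ i, max (a i - t * usefulReduction a d i) 0 =
      ∑ i, max (a i) 0 - t * ∑ i, usefulReduction a d i := by
  rw [mul_sum, ← sum_sub_distrib]
  refine sum_congr rfl fun i _ => max_sub_zero_of_le_max_zero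
    (mul_nonneg ht₀ (usefulReduction_nonneg hd i)) ?_
  exact (mul_le_of_le_one_left (usefulReduction_nonneg hd i) ht₁).trans (min_le_right _ _)

theorem max_le_sum_max_sub_zero {δ : ι → ℝ} {Γ : ℝ} (hδ : ∀ i, 0 ≤ δ i ∧ δ i ≤ d i)
    (hδΓ : ∑ i, δ i ≤ Γ) :
    max (∑ i, max (a i) 0 - Γ) (∑ i, max (a i - d i) 0) ≤ ∑ i, max (a i - δ i) 0 := by
  refine max_le ?_ (sum_le_sum fun i _ => max_le_max (by linarith [(hδ i).2]) le_rfl)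
  calc ∑ i, max (a i) 0 - Γ ≤ ∑ i, (max (a i) 0 - δ i) := by rw [sum_sub_distrib]; linarith
    _ ≤ ∑ i, max (a i - δ i) 0 := sum_le_sum fun i _ => max_zero_sub_le_max_sub_zero (hδ i).1

end BudgetedReduction

theorem stmt4_general (n : ℕ) (a d : Fin n → ℝ) (hd : ∀ i, 0 ≤ d i)
    (Γ : ℝ) (hΓ : 0 ≤ Γ) :
    IsLeast {v | ∃ δ : Fin n → ℝ, (∀ i, 0 ≤ δ i ∧ δ i ≤ d i) ∧ (∑ i, δ i) ≤ Γ ∧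
        v = ∑ i, max (a i - δ i) 0}
      (max ((∑ i, max (a i) 0) - Γ) (∑ i, max (a i - d i) 0)) := by
  have hc := usefulReduction_nonneg (a := a) hd
  obtain ⟨t, ht₀, ht₁, htS⟩ := exists_mul_eq_min (S := ∑ i, usefulReduction a d i) hΓ
  refine ⟨⟨fun i => t * usefulReduction a d i, fun i => ⟨mul_nonneg ht₀ (hc i), ?_⟩, ?_, ?_⟩, ?_⟩
  · exact (mul_le_of_le_one_left (hc i) ht₁).trans (min_le_left _ _)
  · rw [← mul_sum, htS]
    exact min_le_right _ _
  · rw [sum_max_sub_mul_usefulReduction hd ht₀ ht₁, htS, ← max_sub_sub_left,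
      sum_max_zero_sub_sum_usefulReduction hd, max_comm]
  · rintro v ⟨δ, hδ, hδΓ, rfl⟩
    exact max_le_sum_max_sub_zero hδ hδΓ

/-- The optimal value of the budgeted reduction subproblem:
`min { Σ [a_i − δ_i]_+ : 0 ≤ δ ≤ d, Σ δ ≤ Γ } = max { Σ [a_i]_+ − Γ, Σ [a_i − d_i]_+ }`. -/
theorem stmt4 (n : ℕ) (hn : 1 ≤ n) (a d : Fin n → ℝ) (hd : ∀ i, 0 ≤ d i)
    (Γ : ℝ) (hΓ : 0 ≤ Γ) :
    IsLeast {v | ∃ δ : Fin n → ℝ, (∀ i, 0 ≤ δ i ∧ δ i ≤ d i) ∧ (∑ i, δ i) ≤ Γ ∧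
        v = ∑ i, max (a i - δ i) 0}
      (max ((∑ i, max (a i) 0) - Γ) (∑ i, max (a i - d i) 0)) :=
  stmt4_general n a d hd Γ hΓ
end

section
/- Let n, p, k be integers with 1 ≤ p ≤ n and 0 ≤ k ≤ p, let x ∈ Φ, and let c̲, d ∈ ℝ^n_{≥0} and Γ ≥ 0. Then max_{c ∈ U^c} min_{y ∈ Φ^k_x} Σ_{i=1}^n c_i·y_i = sup_{α ∈ ℝ, β ≥ 0} { p·α + (p−k)·β − max { Σ_{i=1}^n [α + β·x_i − c̲_i]_+ − Γ, Σ_{i=1}^n [α + β·x_i − c̲_i − d_i]_+ } }. -/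
open Finset

noncomputable section

/-!
For a fixed cost vector `c` the recovery problem `min_{y ∈ Φ^k_x} c·y` has the Lagrangian dual
`max_{α, β ≥ 0} p α + (p - k) β - Σ [α + β x_i - c_i]_+`. Weak duality is termwise; strong
duality is witnessed greedily: take the `p - k` cheapest items of the support of `x`, then the `k`
cheapest of the remaining items, and read `α + β` and `α` off as threshold costs of these two
choices (taking `β = 0` when the first threshold lies below the second). The two maximisations then commute, and for `e_i = α + β x_i - c̲_i` the adversary's
problem `min_δ Σ [e_i - δ_i]_+` over the budget set has value
`max (Σ [e_i]_+ - Γ) (Σ [e_i - d_i]_+)`: lower each `e_i` by `min d_i [e_i]_+`, scaled down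
uniformly if this exceeds the budget.
-/

section Threshold

variable {ι : Type*}

lemma le_of_isMinOn_sum_powersetCard [DecidableEq ι] {c : ι → ℝ} {U A : Finset ι}
    {m : ℕ} (hA : A ∈ U.powersetCard m)
    (hmin : IsMinOn (fun B => ∑ i ∈ B, c i) (U.powersetCard m) A) {j i : ι} (hj : j ∈ A)
    (hi : i ∈ U \ A) : c j ≤ c i := by
  obtain ⟨hAU, hAcard⟩ := mem_powersetCard.1 hA
  obtain ⟨hiU, hiA⟩ := mem_sdiff.1 hi
  have hiA' : i ∉ A.erase j := fun h => hiA (mem_of_mem_erase h)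
  have hswap : insert i (A.erase j) ∈ U.powersetCard m := by
    refine mem_powersetCard.2 ⟨insert_subset hiU ((erase_subset j A).trans hAU), ?_⟩
    rw [card_insert_of_notMem hiA', card_erase_of_mem hj, ← hAcard]
    have := card_pos.2 ⟨j, hj⟩
    omega
  have := isMinOn_iff.1 hmin _ hswap
  rw [sum_insert hiA', sum_erase_eq_sub hj] at this
  linarith

lemma exists_separating_value (c : ι → ℝ) {T V : Finset ι}
    (h : ∀ j ∈ T, ∀ i ∈ V, c j ≤ c i) :
    ∃ t, (∀ j ∈ T, c j ≤ t) ∧ ∀ i ∈ V, t ≤ c i := by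
  rcases T.eq_empty_or_nonempty with rfl | hT
  · obtain ⟨t, ht⟩ := (V.image c).bddBelow
    exact ⟨t, by simp, fun i hi => ht (mem_coe.2 (mem_image_of_mem c hi))⟩
  · exact ⟨T.sup' hT c, fun j hj => le_sup' c hj,
      fun i hi => sup'_le hT c fun j hj => h j hj i hi⟩

lemma exists_threshold_of_isMinOn_sum_powersetCard [DecidableEq ι] {c : ι → ℝ}
    {U A : Finset ι} {m : ℕ} (hA : A ∈ U.powersetCard m)
    (hmin : IsMinOn (fun B => ∑ i ∈ B, c i) (U.powersetCard m) A) :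
    ∃ t, (∀ j ∈ A, c j ≤ t) ∧ ∀ i ∈ U \ A, t ≤ c i :=
  exists_separating_value c fun _ hj _ hi => le_of_isMinOn_sum_powersetCard hA hmin hj hi

lemma sum_add_sum_max_sub_eq_card_mul [DecidableEq ι] {c : ι → ℝ} {T U : Finset ι}
    {t : ℝ} (hTU : T ⊆ U) (hT : ∀ i ∈ T, c i ≤ t) (hU : ∀ i ∈ U \ T, t ≤ c i) :
    ∑ i ∈ T, c i + ∑ i ∈ U, max (t - c i) 0 = #T * t := by
  have houter : ∑ i ∈ U \ T, max (t - c i) 0 = 0 :=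
    sum_eq_zero fun i hi => max_eq_right (by linarith [hU i hi])
  rw [← sum_sdiff hTU, houter, zero_add, ← sum_add_distrib,
    sum_congr rfl fun i hi => show c i + max (t - c i) 0 = t by
      rw [max_eq_left (by linarith [hT i hi])]; ring]
  simp

end Threshold

section RecoveryDuality

variable {ι : Type*} [Fintype ι] [DecidableEq ι]

lemma exists_recovery_set_sum_le_dual (c : ι → ℝ) (S : Finset ι) {k : ℕ} (hk : k ≤ #S) :
    ∃ T : Finset ι, #T = #S ∧ #S - k ≤ #(S ∩ T) ∧ ∃ α β : ℝ, 0 ≤ β ∧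
      ∑ i ∈ T, c i ≤ #S * α + (#S - k : ℝ) * β -
        (∑ i ∈ S, max (α + β - c i) 0 + ∑ i ∈ Sᶜ, max (α - c i) 0) := by
  obtain ⟨A, hA, hAmin⟩ :=
    exists_min_image (S.powersetCard (#S - k)) (fun A => ∑ i ∈ A, c i)
    (powersetCard_nonempty.2 (Nat.sub_le _ _))
  obtain ⟨hAS, hAcard⟩ := mem_powersetCard.1 hA
  have hBex : k ≤ #(univ \ A) := by
    rw [card_sdiff_of_subset (subset_univ A), card_univ, hAcard]
    have := card_le_univ S
    omega
  obtain ⟨B, hB, hBmin⟩ :=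
    exists_min_image ((univ \ A).powersetCard k) (fun B => ∑ i ∈ B, c i)
    (powersetCard_nonempty.2 hBex)
  obtain ⟨hBA, hBcard⟩ := mem_powersetCard.1 hB
  have hdisj : Disjoint A B := disjoint_left.2 fun i hiA hiB => (mem_sdiff.1 (hBA hiB)).2 hiA
  obtain ⟨s, hcs, hsc⟩ :=
    exists_threshold_of_isMinOn_sum_powersetCard hA (isMinOn_iff.2 hAmin)
  obtain ⟨α, hcα, hαc⟩ :=
    exists_threshold_of_isMinOn_sum_powersetCard hB (isMinOn_iff.2 hBmin)
  have hcard : #(A ∪ B) = #S := by rw [card_union_of_disjoint hdisj]; omega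
  have hAk : ((#A : ℕ) : ℝ) = #S - k := by rw [hAcard, Nat.cast_sub hk]
  refine ⟨A ∪ B, hcard, hAcard ▸ card_le_card (subset_inter hAS subset_union_left), ?_⟩
  rw [sum_union hdisj]
  rcases le_or_gt α s with hαs | hsα
  · -- `A` is cut off at level `s`, `B` at level `α`
    refine ⟨α, s - α, sub_nonneg.2 hαs, ?_⟩
    have hA_eq := sum_add_sum_max_sub_eq_card_mul hAS hcs hsc
    have hB_eq := sum_add_sum_max_sub_eq_card_mul hBA hcα hαc
    have hcompl : ∑ i ∈ Sᶜ, max (α - c i) 0 ≤ ∑ i ∈ univ \ A, max (α - c i) 0 :=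
      sum_le_sum_of_subset_of_nonneg (fun i hi => mem_sdiff.2 ⟨mem_univ i,
        fun hiA => mem_compl.1 hi (hAS hiA)⟩) fun _ _ _ => le_max_right _ _
    rw [hAk] at hA_eq
    rw [hBcard] at hB_eq
    simp only [add_sub_cancel]
    linarith
  · -- `s < α`: the whole of `A ∪ B` is cut off at level `α`
    refine ⟨α, 0, le_rfl, ?_⟩
    have hAB_eq := sum_add_sum_max_sub_eq_card_mul (subset_univ (A ∪ B))
      (c := c) (t := α) (fun i hi => (mem_union.1 hi).elim (fun hiA => (hcs i hiA).trans hsα.le)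
        (hcα i)) fun i hi => by
      simp only [mem_sdiff, mem_univ, mem_union, not_or, true_and] at hi
      exact hαc i (mem_sdiff.2 ⟨mem_sdiff.2 ⟨mem_univ i, hi.1⟩, hi.2⟩)
    rw [sum_union hdisj, hcard, ← sum_add_sum_compl S] at hAB_eq
    simp only [add_zero, mul_zero]
    linarith

end RecoveryDuality

section Budget

variable {ι : Type*} [Fintype ι]

lemma max_sum_max_sub_le_sum_max_sub (e d δ : ι → ℝ) {Γ : ℝ}
    (hδ : ∀ i, 0 ≤ δ i ∧ δ i ≤ d i) (hδΓ : ∑ i, δ i ≤ Γ) :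
    max (∑ i, max (e i) 0 - Γ) (∑ i, max (e i - d i) 0) ≤ ∑ i, max (e i - δ i) 0 := by
  refine max_le ?_ (sum_le_sum fun i _ => max_le_max_right 0 (by linarith [(hδ i).2]))
  have hpt : ∀ i, max (e i) 0 - δ i ≤ max (e i - δ i) 0 := fun i => by
    rcases le_total (e i) 0 with h | h <;> simp [h, (hδ i).1]
  calc ∑ i, max (e i) 0 - Γ ≤ ∑ i, (max (e i) 0 - δ i) := by rw [sum_sub_distrib]; linarith
    _ ≤ ∑ i, max (e i - δ i) 0 := sum_le_sum fun i _ => hpt i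

lemma exists_sum_max_sub_le (e d : ι → ℝ) {Γ : ℝ} (hd : ∀ i, 0 ≤ d i) (hΓ : 0 ≤ Γ) :
    ∃ δ : ι → ℝ, (∀ i, 0 ≤ δ i ∧ δ i ≤ d i) ∧ ∑ i, δ i ≤ Γ ∧
      ∑ i, max (e i - δ i) 0 ≤ max (∑ i, max (e i) 0 - Γ) (∑ i, max (e i - d i) 0) := by
  set m : ι → ℝ := fun i => min (d i) (max (e i) 0)
  have hm0 : ∀ i, 0 ≤ m i := fun i => le_min (hd i) (le_max_right _ _)
  have hmd : ∀ i, m i ≤ d i := fun i => min_le_left _ _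
  rcases le_or_gt (∑ i, m i) Γ with hmΓ | hΓm
  · refine ⟨m, fun i => ⟨hm0 i, hmd i⟩, hmΓ, le_max_of_le_right (le_of_eq (sum_congr rfl
      fun i _ => ?_))⟩
    grind
  · set t := Γ / ∑ i, m i
    have ht0 : 0 ≤ t := div_nonneg hΓ (sum_nonneg fun i _ => hm0 i)
    have ht1 : t ≤ 1 := (div_le_one (hΓ.trans_lt hΓm)).2 hΓm.le
    have hsum : ∑ i, t * m i = Γ := by
      rw [← mul_sum, div_mul_cancel₀ _ (hΓ.trans_lt hΓm).ne']
    refine ⟨fun i => t * m i, fun i => ⟨mul_nonneg ht0 (hm0 i),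
      (mul_le_of_le_one_left (hm0 i) ht1).trans (hmd i)⟩, hsum.le, le_max_of_le_left ?_⟩
    rw [← hsum, ← sum_sub_distrib]
    refine le_of_eq (sum_congr rfl fun i _ => ?_)
    have hu : t * m i ≤ max (e i) 0 :=
      (mul_le_of_le_one_left (hm0 i) ht1).trans (min_le_right _ _)
    have := mul_nonneg ht0 (hm0 i)
    grind

end Budget

section Recovery

variable {n p k : ℕ}

def recoveryDual (p k : ℕ) (x c : Fin n → ℝ) (α β : ℝ) : ℝ :=
  p * α + (p - k) * β - ∑ i, max (α + β * x i - c i) 0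

lemma recoveryDual_le_sum_mul {x y : Fin n → ℝ} (c : Fin n → ℝ) (hy : y ∈ selPhiK n p k x)
    {α β : ℝ} (hβ : 0 ≤ β) : recoveryDual p k x c α β ≤ ∑ i, c i * y i := by
  obtain ⟨hy01, hysum, hxy⟩ := hy
  have hpt : ∀ i, (α + β * x i) * y i ≤ c i * y i + max (α + β * x i - c i) 0 := fun i => by
    rcases hy01 i with h | h
    · simp [h]
    · rw [h, mul_one, mul_one]
      linarith [le_max_left (α + β * x i - c i) 0]
  have hlin : ∑ i, (α + β * x i) * y i = α * ∑ i, y i + β * ∑ i, x i * y i := by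
    simp only [add_mul, sum_add_distrib, mul_sum, mul_assoc]
  have := sum_le_sum fun i (_ : i ∈ univ) => hpt i
  rw [sum_add_distrib, hlin, hysum] at this
  unfold recoveryDual
  linarith [mul_le_mul_of_nonneg_left hxy hβ]

lemma mem_selPhiK_self {x : Fin n → ℝ} (hx : x ∈ selPhi n p) : x ∈ selPhiK n p k x := by
  obtain ⟨hx01, hxsum⟩ := hx
  refine ⟨hx01, hxsum, ?_⟩
  have hsq : ∀ i, x i * x i = x i := fun i => by rcases hx01 i with h | h <;> simp [h]
  simp only [hsq, hxsum, sub_le_self_iff, Nat.cast_nonneg]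

lemma incVal_le_sum_mul {S : Set (Fin n → ℝ)} (hS : ∀ y ∈ S, ∀ i, y i = 0 ∨ y i = 1)
    (c : Fin n → ℝ) {y : Fin n → ℝ} (hy : y ∈ S) : incVal n S c ≤ ∑ i, c i * y i := by
  refine csInf_le ⟨∑ i, min (c i) 0, ?_⟩ ⟨y, hy, rfl⟩
  rintro _ ⟨z, hz, rfl⟩
  exact sum_le_sum fun i _ => by rcases hS z hz i with h | h <;> simp [h]

lemma recoveryDual_le_incVal {x : Fin n → ℝ} (hx : x ∈ selPhi n p) (c : Fin n → ℝ)
    {α β : ℝ} (hβ : 0 ≤ β) : recoveryDual p k x c α β ≤ incVal n (selPhiK n p k x) c :=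
  le_csInf ⟨_, x, mem_selPhiK_self hx, rfl⟩
    fun _ ⟨_, hy, hv⟩ => hv ▸ recoveryDual_le_sum_mul c hy hβ

lemma exists_finset_of_mem_selPhi {x : Fin n → ℝ} (hx : x ∈ selPhi n p) :
    ∃ S : Finset (Fin n), #S = p ∧ x = fun i => if i ∈ S then 1 else 0 := by
  obtain ⟨hx01, hxsum⟩ := hx
  have hx_eq : x = fun i => if i ∈ univ.filter (x · = 1) then 1 else 0 := by
    ext i
    rcases hx01 i with h | h <;> simp [h]
  refine ⟨_, ?_, hx_eq⟩
  rw [hx_eq] at hxsum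
  simpa using hxsum

lemma incVal_le_recoveryDual (hk : k ≤ p) {x : Fin n → ℝ} (hx : x ∈ selPhi n p)
    (c : Fin n → ℝ) :
    ∃ α β : ℝ, 0 ≤ β ∧ incVal n (selPhiK n p k x) c ≤ recoveryDual p k x c α β := by
  obtain ⟨S, rfl, rfl⟩ := exists_finset_of_mem_selPhi hx
  obtain ⟨T, hT, hST, α, β, hβ, hle⟩ := exists_recovery_set_sum_le_dual c S hk
  have hy : (fun i => if i ∈ T then (1 : ℝ) else 0) ∈
      selPhiK n #S k fun i => if i ∈ S then 1 else 0 := by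
    refine ⟨fun i => by by_cases h : i ∈ T <;> simp [h], by simp [hT], ?_⟩
    simp only [mul_ite, mul_one, mul_zero, sum_ite_mem, univ_inter, sum_const, nsmul_one,
      inter_comm T S]
    rw [← Nat.cast_sub hk]
    exact_mod_cast hST
  refine ⟨α, β, hβ, (incVal_le_sum_mul (fun _ hy => hy.1) c hy).trans ?_⟩
  have hsplit : ∑ i, max (α + β * (if i ∈ S then 1 else 0) - c i) 0
      = ∑ i ∈ S, max (α + β - c i) 0 + ∑ i ∈ Sᶜ, max (α - c i) 0 := by
    rw [← sum_add_sum_compl S]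
    congr 1 <;> refine sum_congr rfl fun i hi => ?_
    · simp [hi]
    · simp [mem_compl.1 hi]
  rw [recoveryDual, hsplit]
  simpa [mul_ite, sum_ite_mem] using hle

lemma recoveryDual_add (x cl δ : Fin n → ℝ) (α β : ℝ) :
    recoveryDual p k x (fun i => cl i + δ i) α β =
      p * α + (p - k) * β - ∑ i, max ((α + β * x i - cl i) - δ i) 0 := by
  simp only [recoveryDual, sub_add_eq_sub_sub]

end Recovery

theorem stmt5_general (n p k : ℕ) (hk : k ≤ p)
    (x : Fin n → ℝ) (hx : x ∈ selPhi n p)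
    (cl d : Fin n → ℝ) (hd : ∀ i, 0 ≤ d i)
    (Γ : ℝ) (hΓ : 0 ≤ Γ) :
    sSup {v | ∃ c ∈ Uc n cl d Γ, v = incVal n (selPhiK n p k x) c} =
      sSup {v | ∃ α β : ℝ, 0 ≤ β ∧
        v = (p : ℝ) * α + ((p : ℝ) - (k : ℝ)) * β -
          max ((∑ i, max (α + β * x i - cl i) 0) - Γ)
              (∑ i, max (α + β * x i - cl i - d i) 0)} := by
  apply csSup_eq_csSup_of_forall_exists_le
  · rintro _ ⟨_, ⟨δ, hδ, hδΓ, rfl⟩, rfl⟩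
    obtain ⟨α, β, hβ, hle⟩ := incVal_le_recoveryDual hk hx fun i => cl i + δ i
    refine ⟨_, ⟨α, β, hβ, rfl⟩, hle.trans ?_⟩
    rw [recoveryDual_add]
    linarith [max_sum_max_sub_le_sum_max_sub (fun i => α + β * x i - cl i) d δ hδ hδΓ]
  · rintro _ ⟨α, β, hβ, rfl⟩
    obtain ⟨δ, hδ, hδΓ, hle⟩ :=
      exists_sum_max_sub_le (fun i => α + β * x i - cl i) d hd hΓ
    refine ⟨_, ⟨_, ⟨δ, hδ, hδΓ, rfl⟩, rfl⟩, ?_⟩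
    refine le_trans ?_ (recoveryDual_le_incVal hx _ hβ (α := α))
    rw [recoveryDual_add]
    linarith

/-- The adversarial problem AREC under `U^c` equals the optimum of problem (7). -/
theorem stmt5 (n p k : ℕ) (hp1 : 1 ≤ p) (hpn : p ≤ n) (hk : k ≤ p)
    (x : Fin n → ℝ) (hx : x ∈ selPhi n p)
    (cl d : Fin n → ℝ) (hcl : ∀ i, 0 ≤ cl i) (hd : ∀ i, 0 ≤ d i)
    (Γ : ℝ) (hΓ : 0 ≤ Γ) :
    sSup {v | ∃ c ∈ Uc n cl d Γ, v = incVal n (selPhiK n p k x) c} =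
      sSup {v | ∃ α β : ℝ, 0 ≤ β ∧
        v = (p : ℝ) * α + ((p : ℝ) - (k : ℝ)) * β -
          max ((∑ i, max (α + β * x i - cl i) 0) - Γ)
              (∑ i, max (α + β * x i - cl i - d i) 0)} :=
  stmt5_general n p k hk x hx cl d hd Γ hΓ

end
end

section
/- Let n, p, k be integers with 1 ≤ p ≤ n and 0 ≤ k ≤ p, let c̲, d ∈ ℝ^n_{≥0} and Γ ≥ 0. Let r, s ∈ [n] be two items with c̲_r ≤ c̲_s and c̲_r + d_r ≤ c̲_s + d_s. Let x ∈ Φ with x_s = 1 and x_r = 0, and let x' ∈ Φ be obtained from x by setting x'_s = 0 and x'_r = 1 (all other entries unchanged). Then max_{c ∈ U^c} min_{y ∈ Φ^k_{x'}} Σ_i c_i·y_i ≤ max_{c ∈ U^c} min_{y ∈ Φ^k_x} Σ_i c_i·y_i (dominance rule). -/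
/-!
With `σ` the transposition of `r` and `s`, the new selection is `x' = x ∘ σ`. Given a scenario `c`,
if `c r ≤ c s` then every recovery from `x` is matched by a recovery from `x'` that is no more
expensive under `c`. If `c s < c r`, the scenario `c ∘ σ` is still admissible because `r`
dominates `s`, and relabelling by `σ` turns the recovery problem from `x'` under `c` into the one
from `x` under `c ∘ σ`. Either way the inner value for `x'` is matched by one for `x`.
-/

open Finset

noncomputable section

lemma sSup_le_sSup_of_forall_exists_le {α : Type*} {U : Set α} {f g : α → ℝ}
    (hg : BddAbove {v | ∃ c ∈ U, v = g c}) (h : ∀ c ∈ U, ∃ c' ∈ U, f c ≤ g c') :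
    sSup {v | ∃ c ∈ U, v = f c} ≤ sSup {v | ∃ c ∈ U, v = g c} := by
  rcases U.eq_empty_or_nonempty with rfl | ⟨c₀, hc₀⟩
  · simp
  refine csSup_le ⟨f c₀, c₀, hc₀, rfl⟩ ?_
  rintro v ⟨c, hc, rfl⟩
  obtain ⟨c', hc', hle⟩ := h c hc
  exact hle.trans (le_csSup hg ⟨c', hc', rfl⟩)

lemma Fintype.sum_comp_swap_mul {ι : Type*} [Fintype ι] [DecidableEq ι] {r s : ι} (hrs : r ≠ s)
    (f g : ι → ℝ) :
    ∑ i, f (Equiv.swap r s i) * g i = ∑ i, f i * g i + (f s - f r) * (g r - g s) := by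
  have hdiff : ∑ i, (f (Equiv.swap r s i) * g i - f i * g i) = (f s - f r) * (g r - g s) := by
    rw [Fintype.sum_eq_add r s hrs fun i hi => by
      rw [Equiv.swap_apply_of_ne_of_ne hi.1 hi.2, sub_self]]
    simp only [Equiv.swap_apply_left, Equiv.swap_apply_right]
    ring
  rw [← hdiff, Finset.sum_sub_distrib]
  ring

section Recovery

variable {n p k : ℕ}

lemma selPhiK_finite (x : Fin n → ℝ) : (selPhiK n p k x).Finite :=
  (Set.Finite.pi (t := fun _ => ({0, 1} : Set ℝ)) fun _ => Set.toFinite _).subset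
    fun _ hy i _ => hy.1 i

lemma incVal_le_of_mem {S : Set (Fin n → ℝ)} (hS : S.Finite) (c : Fin n → ℝ)
    {y : Fin n → ℝ} (hy : y ∈ S) : incVal n S c ≤ ∑ i, c i * y i := by
  refine csInf_le ?_ ⟨y, hy, rfl⟩
  refine ((hS.image fun y => ∑ i, c i * y i).subset ?_).bddBelow
  rintro v ⟨y, hy, rfl⟩
  exact ⟨y, hy, rfl⟩

lemma incVal_le_incVal_of_forall_exists_le {S T : Set (Fin n → ℝ)} (hS : S.Finite)
    (hT : T.Nonempty) (c : Fin n → ℝ)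
    (h : ∀ y ∈ T, ∃ y' ∈ S, ∑ i, c i * y' i ≤ ∑ i, c i * y i) :
    incVal n S c ≤ incVal n T c := by
  obtain ⟨y₀, hy₀⟩ := hT
  refine le_csInf ⟨_, y₀, hy₀, rfl⟩ ?_
  rintro v ⟨y, hy, rfl⟩
  obtain ⟨y', hy', hle⟩ := h y hy
  exact (incVal_le_of_mem hS c hy').trans hle

lemma comp_perm_mem_selPhiK (σ : Equiv.Perm (Fin n)) {x y : Fin n → ℝ}
    (hy : y ∈ selPhiK n p k x) : y ∘ σ ∈ selPhiK n p k (x ∘ σ) := by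
  obtain ⟨h01, hsum, hov⟩ := hy
  refine ⟨fun i => h01 (σ i), ?_, ?_⟩
  · rwa [← Equiv.sum_comp σ y] at hsum
  · simpa only [Function.comp_apply, Equiv.sum_comp σ fun i => x i * y i] using hov

lemma incVal_selPhiK_comp_perm (σ : Equiv.Perm (Fin n)) (x c : Fin n → ℝ) :
    incVal n (selPhiK n p k (x ∘ σ)) (c ∘ σ) = incVal n (selPhiK n p k x) c := by
  unfold incVal
  congr 1
  ext v
  constructor
  · rintro ⟨y, hy, rfl⟩
    refine ⟨y ∘ σ.symm, by simpa [Function.comp_def] using comp_perm_mem_selPhiK σ.symm hy, ?_⟩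
    simp only [Function.comp_apply]
    rw [← Equiv.sum_comp σ fun i => c i * y (σ.symm i)]
    simp
  · rintro ⟨y, hy, rfl⟩
    exact ⟨y ∘ σ, comp_perm_mem_selPhiK σ hy,
      (Equiv.sum_comp σ fun i => c i * y i).symm⟩

/-- A recovery `y` taking `s` but not `r` is replaced by its swap, which is no more expensive and
has the same overlap with the new selection; any other `y` keeps at least its overlap. -/
lemma incVal_selPhiK_comp_swap_le {x : Fin n → ℝ} (hx : x ∈ selPhi n p) {r s : Fin n}
    (hxr : x r = 0) (hxs : x s = 1) {c : Fin n → ℝ} (hc : c r ≤ c s) :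
    incVal n (selPhiK n p k (x ∘ Equiv.swap r s)) c ≤ incVal n (selPhiK n p k x) c := by
  have hrs : r ≠ s := by rintro rfl; simp_all
  refine incVal_le_incVal_of_forall_exists_le (selPhiK_finite _) ⟨x, mem_selPhiK_self hx⟩ c ?_
  intro y hy
  by_cases hswap : y r = 0 ∧ y s = 1
  · refine ⟨y ∘ Equiv.swap r s, comp_perm_mem_selPhiK _ hy, ?_⟩
    have hcost := Fintype.sum_comp_swap_mul hrs y c
    simp only [Function.comp_apply, mul_comm (c _)] at hcost ⊢
    rw [hcost, hswap.1, hswap.2]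
    linarith
  · obtain ⟨h01, hsum, hle⟩ := hy
    have hys : y s ≤ y r := by
      rcases h01 r with h | h <;> rcases h01 s with h' | h' <;> simp_all
    have hov := Fintype.sum_comp_swap_mul hrs x y
    rw [hxr, hxs] at hov
    refine ⟨y, ⟨h01, hsum, ?_⟩, le_rfl⟩
    simp only [Function.comp_apply] at hov ⊢
    linarith

end Recovery

lemma mem_Uc_iff {n : ℕ} {cl d c : Fin n → ℝ} {Γ : ℝ} :
    c ∈ Uc n cl d Γ ↔ (∀ i, cl i ≤ c i ∧ c i ≤ cl i + d i) ∧ ∑ i, (c i - cl i) ≤ Γ := by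
  constructor
  · rintro ⟨δ, hδ, hsum, rfl⟩
    refine ⟨fun i => ⟨by linarith [hδ i], by linarith [hδ i]⟩, by simpa using hsum⟩
  · rintro ⟨hbd, hsum⟩
    exact ⟨fun i => c i - cl i, fun i => ⟨by linarith [hbd i], by linarith [hbd i]⟩, hsum,
      by ext; ring⟩

lemma comp_swap_mem_Uc {n : ℕ} {cl d c : Fin n → ℝ} {Γ : ℝ} (hc : c ∈ Uc n cl d Γ)
    {r s : Fin n} (h1 : cl r ≤ cl s) (h2 : cl r + d r ≤ cl s + d s) (hcs : c s ≤ c r) :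
    c ∘ Equiv.swap r s ∈ Uc n cl d Γ := by
  obtain ⟨hbd, hsum⟩ := mem_Uc_iff.mp hc
  refine mem_Uc_iff.mpr ⟨fun i => ?_, ?_⟩
  · rcases eq_or_ne i r with rfl | hir
    · simp only [Function.comp_apply, Equiv.swap_apply_left]
      constructor <;> linarith [hbd i, hbd s]
    rcases eq_or_ne i s with rfl | his
    · simp only [Function.comp_apply, Equiv.swap_apply_right]
      constructor <;> linarith [hbd i, hbd r]
    · simpa only [Function.comp_apply, Equiv.swap_apply_of_ne_of_ne hir his] using hbd i
  · rw [Finset.sum_sub_distrib] at hsum ⊢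
    simpa only [Function.comp_apply, Equiv.sum_comp (Equiv.swap r s) c] using hsum

lemma update_update_eq_comp_swap {n : ℕ} {x : Fin n → ℝ} {r s : Fin n} (hxr : x r = 0)
    (hxs : x s = 1) :
    Function.update (Function.update x s 0) r 1 = x ∘ Equiv.swap r s := by
  ext i
  rcases eq_or_ne i r with rfl | hir
  · simp [hxs]
  rcases eq_or_ne i s with rfl | his
  · simp [hir, hxr]
  · simp [hir, his, Equiv.swap_apply_of_ne_of_ne hir his]

lemma bddAbove_incVal_selPhiK {n p k : ℕ} {cl d x : Fin n → ℝ} {Γ : ℝ} (hx : x ∈ selPhi n p) :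
    BddAbove {v | ∃ c ∈ Uc n cl d Γ, v = incVal n (selPhiK n p k x) c} := by
  refine ⟨∑ i, (cl i + d i) * x i, ?_⟩
  rintro v ⟨c, hc, rfl⟩
  refine (incVal_le_of_mem (selPhiK_finite x) c (mem_selPhiK_self hx)).trans ?_
  refine Finset.sum_le_sum fun i _ => mul_le_mul_of_nonneg_right ((mem_Uc_iff.mp hc).1 i).2 ?_
  rcases hx.1 i with h | h <;> simp [h]

theorem stmt7_general (n p k : ℕ) (cl d : Fin n → ℝ) (Γ : ℝ)
    (r s : Fin n) (h1 : cl r ≤ cl s) (h2 : cl r + d r ≤ cl s + d s)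
    (x : Fin n → ℝ) (hx : x ∈ selPhi n p) (hxs : x s = 1) (hxr : x r = 0)
    (x' : Fin n → ℝ) (hx' : x' = Function.update (Function.update x s 0) r 1) :
    sSup {v | ∃ c ∈ Uc n cl d Γ, v = incVal n (selPhiK n p k x') c} ≤
      sSup {v | ∃ c ∈ Uc n cl d Γ, v = incVal n (selPhiK n p k x) c} := by
  rw [hx', update_update_eq_comp_swap hxr hxs]
  refine sSup_le_sSup_of_forall_exists_le (bddAbove_incVal_selPhiK hx) fun c hc => ?_
  rcases le_or_gt (c r) (c s) with hcrs | hcsr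
  · exact ⟨c, hc, incVal_selPhiK_comp_swap_le hx hxr hxs hcrs⟩
  · refine ⟨c ∘ Equiv.swap r s, comp_swap_mem_Uc hc h1 h2 hcsr.le, le_of_eq ?_⟩
    rw [← incVal_selPhiK_comp_perm (Equiv.swap r s) x (c ∘ Equiv.swap r s)]
    simp [Function.comp_def]

/-- Dominance rule: exchanging a selected item `s` for a dominating item `r`
does not increase the adversarial value. -/
theorem stmt7 (n p k : ℕ) (hp1 : 1 ≤ p) (hpn : p ≤ n) (hk : k ≤ p)
    (cl d : Fin n → ℝ) (hcl : ∀ i, 0 ≤ cl i) (hd : ∀ i, 0 ≤ d i)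
    (Γ : ℝ) (hΓ : 0 ≤ Γ)
    (r s : Fin n) (h1 : cl r ≤ cl s) (h2 : cl r + d r ≤ cl s + d s)
    (x : Fin n → ℝ) (hx : x ∈ selPhi n p) (hxs : x s = 1) (hxr : x r = 0)
    (x' : Fin n → ℝ) (hx' : x' = Function.update (Function.update x s 0) r 1) :
    sSup {v | ∃ c ∈ Uc n cl d Γ, v = incVal n (selPhiK n p k x') c} ≤
      sSup {v | ∃ c ∈ Uc n cl d Γ, v = incVal n (selPhiK n p k x) c} :=
  stmt7_general n p k cl d Γ r s h1 h2 x hx hxs hxr x' hx'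
end
end

section
/- Let n, p, k be integers with 1 ≤ p ≤ n and 0 ≤ k ≤ p, and let C, c̲, c̄ ∈ ℝ^n_{≥0} with c̲_i ≤ c̄_i for all i, and Γ ≥ 0. Consider the optimization problem: minimize Σ_i C_i·x_i + π·Σ_i c̲_i·z_i + (1−π)·Σ_i c̄_i·z̄_i + Γ·π over x ∈ {0,1}^n with Σ_i x_i = p, z, z̄ ∈ [0,1]^n and π ∈ [0,1], subject to Σ_i (π·z_i + (1−π)·z̄_i) = p and Σ_i x_i·(π·z_i + (1−π)·z̄_i) ≥ p−k. Then there exists an optimal solution (x, z, z̄, π) such that (1) at most one of the 2n variables z_1,…,z_n, z̄_1,…,z̄_n lies strictly between 0 and 1, and (2) π = q/r for some integers q ∈ {0,…,n} and r ∈ {1,…,n+1}. -/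
open Finset

noncomputable section

/-- Feasibility for the rescaled RREC formulation (problem (13)). -/
def Feas8 (n p k : ℕ) (x z zb : Fin n → ℝ) (π : ℝ) : Prop :=
  (∀ i, x i = 0 ∨ x i = 1) ∧ (∑ i, x i) = (p : ℝ) ∧
  (∀ i, z i ∈ Set.Icc (0 : ℝ) 1) ∧ (∀ i, zb i ∈ Set.Icc (0 : ℝ) 1) ∧
  π ∈ Set.Icc (0 : ℝ) 1 ∧
  (∑ i, (π * z i + (1 - π) * zb i)) = (p : ℝ) ∧
  (p : ℝ) - (k : ℝ) ≤ ∑ i, x i * (π * z i + (1 - π) * zb i)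

/-- Objective of the rescaled RREC formulation (problem (13)). -/
def Obj8 (n : ℕ) (C cl cu : Fin n → ℝ) (Γ : ℝ) (x z zb : Fin n → ℝ) (π : ℝ) : ℝ :=
  (∑ i, C i * x i) + π * (∑ i, cl i * z i) + (1 - π) * (∑ i, cu i * zb i) + Γ * π

/-!
Substituting the slot loads `a = π z` and `b = (1 - π) zb` makes (13), for a fixed selection `x`,
the minimization of a linear functional over a polytope in `(a, b, π)`; by Krein–Milman some
minimizer is an extreme point, and at an extreme point every direction that preserves the active
constraints vanishes. Two fractional loads can be moved against each other unless they lie on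
different sides of a tight side constraint. Then, if `0 < π < 1`, moving `π` together with the
capped loads gives a third degree of freedom, and if `π ∈ {0, 1}` all caps are integers, so the
tight side cannot carry a single fractional load. For `0 < π < 1` the same directions yield a block
of items without fractional loads whose total `π α + (1 - π) β` is an integer with `α ≠ β`, where
`α, β ≤ n` count the capped loads of each kind; hence `π = q / r` with `r = |α - β|`. Finally one
minimizes over the finitely many selections.
-/

open Filter Topology

section ExtremePoints

variable {E : Type*} [AddCommGroup E] [Module ℝ E]

theorem eq_zero_of_mem_extremePoints {A : Set E} {w d : E} (hw : w ∈ A.extremePoints ℝ)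
    (hd : ∀ᶠ ε in 𝓝 (0 : ℝ), w + ε • d ∈ A) : d = 0 := by
  have hneg : ∀ᶠ ε in 𝓝 (0 : ℝ), w + (-ε) • d ∈ A := by
    have h := (continuous_neg (G := ℝ)).tendsto 0
    rw [neg_zero] at h
    exact h.eventually hd
  obtain ⟨ε, ⟨hplus, hminus⟩, hε⟩ :=
    (((hd.and hneg).filter_mono nhdsWithin_le_nhds).and
      (self_mem_nhdsWithin (s := Set.Ioi (0 : ℝ)))).exists
  rw [neg_smul, ← sub_eq_add_neg] at hminus
  have hseg := hw.2 hminus hplus (mem_openSegment_sub_add w (ε • d))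
  rw [sub_eq_self, smul_eq_zero] at hseg
  exact hseg.resolve_left (ne_of_gt hε)

theorem IsCompact.exists_mem_extremePoints_isMinOn [TopologicalSpace E] [T2Space E]
    [IsTopologicalAddGroup E] [ContinuousSMul ℝ E] [LocallyConvexSpace ℝ E] {s : Set E}
    (hs : IsCompact s) (hne : s.Nonempty) (l : StrongDual ℝ E) :
    ∃ x ∈ s.extremePoints ℝ, IsMinOn l s x := by
  have hexp : IsExposed ℝ s {y ∈ s | ∀ z ∈ s, (-l) z ≤ (-l) y} := fun _ => ⟨-l, rfl⟩
  obtain ⟨z, hzs, hz⟩ := hs.exists_isMinOn hne l.continuous.continuousOn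
  obtain ⟨x, hx⟩ := (hexp.isCompact hs).extremePoints_nonempty
    ⟨z, hzs, fun y hy => neg_le_neg (hz hy)⟩
  exact ⟨x, hexp.isExtreme.extremePoints_subset_extremePoints hx,
    fun y hy => le_of_neg_le_neg (hx.1.2 y hy)⟩

end ExtremePoints

theorem eventually_nonneg_add_mul {s t : ℝ} (hs : 0 ≤ s) (ht : s = 0 → t = 0) :
    ∀ᶠ ε in 𝓝 (0 : ℝ), 0 ≤ s + ε * t := by
  rcases hs.eq_or_lt with rfl | hs
  · simp [ht rfl]
  · have h : Tendsto (fun ε : ℝ => s + ε * t) (𝓝 0) (𝓝 s) := by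
      have hc : Continuous fun ε : ℝ => s + ε * t := by fun_prop
      simpa using hc.tendsto 0
    exact (h.eventually_const_lt hs).mono fun _ => le_of_lt

theorem sum_eq_natCast_of_mem_zero_one {ι : Type*} {T : Finset ι} {f : ι → ℝ}
    (hf : ∀ i ∈ T, f i = 0 ∨ f i = 1) : ∃ N : ℕ, ∑ i ∈ T, f i = N := by
  classical
  refine ⟨(T.filter (f · = 1)).card, ?_⟩
  rw [← sum_boole]
  refine sum_congr rfl fun i hi => ?_
  rcases hf i hi with h | h <;> simp [h]

theorem exists_nat_div_eq_of_mul_eq {x : ℝ} (hx0 : 0 < x) (hx1 : x < 1) {D M : ℤ} {N : ℕ}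
    (hD0 : D ≠ 0) (hDN : D.natAbs ≤ N) (h : x * D = M) :
    ∃ q r : ℕ, q ≤ N ∧ 1 ≤ r ∧ r ≤ N + 1 ∧ x = q / r := by
  have hDpos : (0 : ℝ) < |(D : ℝ)| := abs_pos.2 (by exact_mod_cast hD0)
  have hM : |(M : ℝ)| = x * |(D : ℝ)| := by rw [← h, abs_mul, abs_of_pos hx0]
  have hMD : M.natAbs < D.natAbs := by
    have : |(M : ℝ)| < |(D : ℝ)| := by rw [hM]; nlinarith
    have h' : |M| < |D| := by exact_mod_cast this
    rw [Int.abs_eq_natAbs, Int.abs_eq_natAbs] at h'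
    exact_mod_cast h'
  refine ⟨M.natAbs, D.natAbs, by omega, Int.natAbs_pos.2 hD0, by omega, ?_⟩
  rw [Nat.cast_natAbs, Nat.cast_natAbs, Int.cast_abs, Int.cast_abs, hM,
    mul_div_cancel_right₀ _ hDpos.ne']

lemma ne_zero_and_ne_of_div_mem_Ioo {a b : ℝ} (h : 0 < a / b ∧ a / b < 1) :
    a ≠ 0 ∧ a ≠ b := by
  refine ⟨by rintro rfl; simp at h, ?_⟩
  rintro rfl
  rcases eq_or_ne a 0 with rfl | ha
  · simp at h
  · simp [div_self ha] at h

section DisjSum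

variable {α : Type*} [Fintype α] [DecidableEq α] {S : Finset α}

lemma mem_compl_disjSum_compl {s : α ⊕ α} : s ∈ Sᶜ.disjSum Sᶜ ↔ s ∉ S.disjSum S := by
  cases s <;> simp

lemma sum_compl_disjSum_compl {M : Type*} [AddCommGroup M] (f : α ⊕ α → M) :
    ∑ s ∈ Sᶜ.disjSum Sᶜ, f s = ∑ s, f s - ∑ s ∈ S.disjSum S, f s := by
  rw [eq_sub_iff_add_eq, ← univ_disjSum_univ, sum_disjSum, sum_disjSum, sum_disjSum,
    ← sum_add_sum_compl S fun i => f (.inl i), ← sum_add_sum_compl S fun i => f (.inr i)]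
  abel

end DisjSum

namespace RecoverableSelection

variable {n p k : ℕ} {S : Finset (Fin n)} {y : Fin n ⊕ Fin n → ℝ} {π : ℝ}

/-- Slot `inl i` holds `π * z i ≤ π` and slot `inr i` holds `(1 - π) * zb i ≤ 1 - π`. -/
def cap (π : ℝ) : Fin n ⊕ Fin n → ℝ := Sum.elim (fun _ => π) (fun _ => 1 - π)

def capSlope : Fin n ⊕ Fin n → ℝ := Sum.elim (fun _ => 1) (fun _ => -1)

lemma cap_add_mul (π ε δ : ℝ) (s : Fin n ⊕ Fin n) :
    cap (π + ε * δ) s = cap π s + ε * (capSlope s * δ) := by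
  cases s <;> simp only [cap, capSlope, Sum.elim_inl, Sum.elim_inr] <;> ring

lemma cap_pos (hπ0 : 0 < π) (hπ1 : π < 1) (s : Fin n ⊕ Fin n) : 0 < cap π s := by
  cases s <;> simp only [cap, Sum.elim_inl, Sum.elim_inr] <;> linarith

lemma cap_le_one (hπ0 : 0 ≤ π) (hπ1 : π ≤ 1) (s : Fin n ⊕ Fin n) : cap π s ≤ 1 := by
  cases s <;> simp only [cap, Sum.elim_inl, Sum.elim_inr] <;> linarith

lemma cap_eq_zero_or_one (hπ : π = 0 ∨ π = 1) (s : Fin n ⊕ Fin n) :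
    cap π s = 0 ∨ cap π s = 1 := by
  rcases hπ with rfl | rfl <;> cases s <;> simp [cap]

/-- The feasible set of (13) for the selection `S`, in the slot loads and `π`. -/
def polytope (p k : ℕ) (S : Finset (Fin n)) : Set ((Fin n ⊕ Fin n → ℝ) × ℝ) :=
  {w | 0 ≤ w.2 ∧ w.2 ≤ 1 ∧ (∀ s, 0 ≤ w.1 s) ∧ (∀ s, w.1 s ≤ cap w.2 s) ∧
    ∑ s, w.1 s = p ∧ (p : ℝ) - k ≤ ∑ s ∈ S.disjSum S, w.1 s}

theorem isCompact_polytope (p k : ℕ) (S : Finset (Fin n)) : IsCompact (polytope p k S) := by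
  have hcap : ∀ s : Fin n ⊕ Fin n, Continuous fun w : (Fin n ⊕ Fin n → ℝ) × ℝ => cap w.2 s := by
    rintro (i | i) <;> simp only [cap, Sum.elim_inl, Sum.elim_inr] <;> fun_prop
  have hclosed : IsClosed (polytope p k S) := by
    simp only [polytope, Set.ofPred_and, Set.ofPred_forall]
    refine (isClosed_le continuous_const continuous_snd).inter <|
      (isClosed_le continuous_snd continuous_const).inter <|
      (isClosed_iInter fun s => isClosed_le continuous_const (by fun_prop)).inter <|
      (isClosed_iInter fun s => isClosed_le (by fun_prop) (hcap s)).inter <|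
      (isClosed_eq (by fun_prop) continuous_const).inter <|
      isClosed_le continuous_const (by fun_prop)
  refine (isCompact_Icc (a := 0) (b := 1)).of_isClosed_subset hclosed ?_
  rintro w ⟨hπ0, hπ1, hy0, hycap, -, -⟩
  exact ⟨⟨hy0, hπ0⟩, ⟨fun s => (hycap s).trans (cap_le_one hπ0 hπ1 s), hπ1⟩⟩

theorem eq_zero_of_mem_extremePoints_polytope (hw : (y, π) ∈ (polytope p k S).extremePoints ℝ)
    {d : Fin n ⊕ Fin n → ℝ} {δ : ℝ}
    (hzero : ∀ s, y s = 0 → d s = 0) (hcap : ∀ s, y s = cap π s → d s = capSlope s * δ)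
    (hδ : π = 0 ∨ π = 1 → δ = 0) (hsum : ∑ s, d s = 0)
    (htight : ∑ s ∈ S.disjSum S, y s = p - k → ∑ s ∈ S.disjSum S, d s = 0) :
    d = 0 ∧ δ = 0 := by
  obtain ⟨hπ0, hπ1, hy0, hycap, hysum, hyS⟩ := hw.1
  have hmem : ∀ᶠ ε in 𝓝 (0 : ℝ), (y, π) + ε • (d, δ) ∈ polytope p k S := by
    have e1 := eventually_nonneg_add_mul hπ0 fun h => hδ (.inl h)
    have e2 := eventually_nonneg_add_mul (t := -δ) (sub_nonneg.2 hπ1)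
      fun h => by rw [hδ (.inr (by linarith)), neg_zero]
    have e3 := eventually_all.2 fun s => eventually_nonneg_add_mul (hy0 s) (hzero s)
    have e4 := eventually_all.2 fun s =>
      eventually_nonneg_add_mul (t := capSlope s * δ - d s) (sub_nonneg.2 (hycap s))
        fun h => by rw [hcap s (by linarith), sub_self]
    have e5 := eventually_nonneg_add_mul (t := ∑ s ∈ S.disjSum S, d s) (sub_nonneg.2 hyS)
      fun h => htight (by linarith)
    filter_upwards [e1, e2, e3, e4, e5] with ε h1 h2 h3 h4 h5
    simp only [polytope, Set.mem_ofPred_eq, Prod.smul_mk, Prod.mk_add_mk, Pi.add_apply,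
      Pi.smul_apply, smul_eq_mul, cap_add_mul, sum_add_distrib, ← mul_sum, hsum, hysum]
    refine ⟨by linarith, by linarith, h3, fun s => by linarith [h4 s], by ring, by linarith⟩
  have h := eq_zero_of_mem_extremePoints hw hmem
  exact ⟨congrArg Prod.fst h, congrArg Prod.snd h⟩

def freeSlots (y : Fin n ⊕ Fin n → ℝ) (π : ℝ) : Finset (Fin n ⊕ Fin n) :=
  univ.filter fun s => y s ≠ 0 ∧ y s ≠ cap π s

lemma mem_freeSlots {s : Fin n ⊕ Fin n} : s ∈ freeSlots y π ↔ y s ≠ 0 ∧ y s ≠ cap π s := by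
  simp [freeSlots]

theorem false_of_two_freeSlots (hw : (y, π) ∈ (polytope p k S).extremePoints ℝ)
    {s₁ s₂ : Fin n ⊕ Fin n} (hne : s₁ ≠ s₂) (h₁ : s₁ ∈ freeSlots y π) (h₂ : s₂ ∈ freeSlots y π)
    (hside : (s₁ ∈ S.disjSum S ↔ s₂ ∈ S.disjSum S) ∨ ∑ s ∈ S.disjSum S, y s ≠ p - k) :
    False := by
  classical
  rw [mem_freeSlots] at h₁ h₂
  have hd := eq_zero_of_mem_extremePoints_polytope hw
    (d := Pi.single s₁ 1 - Pi.single s₂ 1) (δ := 0) ?_ ?_ (fun _ => rfl) ?_ ?_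
  · simpa [hne] using congrFun hd.1 s₁
  · intro s hs
    have : s ≠ s₁ := by rintro rfl; exact h₁.1 hs
    have : s ≠ s₂ := by rintro rfl; exact h₂.1 hs
    simp [*]
  · intro s hs
    have : s ≠ s₁ := by rintro rfl; exact h₁.2 hs
    have : s ≠ s₂ := by rintro rfl; exact h₂.2 hs
    simp [*]
  · simp [sum_sub_distrib]
  · intro htight
    simp only [Pi.sub_apply, sum_sub_distrib, sum_pi_single']
    rcases hside with hside | hside
    · simp only [hside, sub_self]
    · exact absurd htight hside

/-- Moving `π` while every slot at its cap stays at its cap. -/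
def capDirection (y : Fin n ⊕ Fin n → ℝ) (π : ℝ) : Fin n ⊕ Fin n → ℝ :=
  fun s => capSlope s * if y s = cap π s then 1 else 0

theorem false_of_capDirection_add (hw : (y, π) ∈ (polytope p k S).extremePoints ℝ)
    (hπ0 : 0 < π) (hπ1 : π < 1) {c : Fin n ⊕ Fin n → ℝ}
    (hc : ∀ s, c s ≠ 0 → s ∈ freeSlots y π)
    (hsum : ∑ s, (capDirection y π s + c s) = 0)
    (htight : ∑ s ∈ S.disjSum S, y s = p - k →
      ∑ s ∈ S.disjSum S, (capDirection y π s + c s) = 0) : False := by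
  have hc' : ∀ s, y s = 0 ∨ y s = cap π s → c s = 0 := fun s hs => by
    by_contra h
    have := mem_freeSlots.1 (hc s h)
    tauto
  have hd := eq_zero_of_mem_extremePoints_polytope hw (δ := 1) ?_ ?_ ?_ hsum htight
  · exact one_ne_zero hd.2
  · intro s hs
    have hcap : y s ≠ cap π s := by rw [hs]; exact (cap_pos hπ0 hπ1 s).ne
    simp [capDirection, hcap, hc' s (.inl hs)]
  · intro s hs
    simp [capDirection, hs, hc' s (.inr hs)]
  · rintro (rfl | rfl) <;> linarith

theorem false_of_freeSlots_in_and_out (hw : (y, π) ∈ (polytope p k S).extremePoints ℝ)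
    (hπ0 : 0 < π) (hπ1 : π < 1) {s₁ s₂ : Fin n ⊕ Fin n}
    (h₁ : s₁ ∈ freeSlots y π) (h₂ : s₂ ∈ freeSlots y π)
    (hs₁ : s₁ ∈ S.disjSum S) (hs₂ : s₂ ∉ S.disjSum S) : False := by
  classical
  set D := ∑ s, capDirection y π s
  set DS := ∑ s ∈ S.disjSum S, capDirection y π s
  have hne : s₁ ≠ s₂ := by rintro rfl; exact hs₂ hs₁
  refine false_of_capDirection_add hw hπ0 hπ1 (c := Pi.single s₁ (-DS) + Pi.single s₂ (DS - D))
    (fun s hs => ?_) ?_ (fun _ => ?_)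
  · by_cases h : s = s₁
    · exact h ▸ h₁
    by_cases h' : s = s₂
    · exact h' ▸ h₂
    simp [h, h'] at hs
  · simp only [Pi.add_apply, sum_add_distrib, sum_pi_single', mem_univ, if_true]
    ring
  · simp only [Pi.add_apply, sum_add_distrib, sum_pi_single', hs₁, hs₂, if_true, if_false]
    ring

theorem false_of_freeSlot_of_tight (hw : (y, π) ∈ (polytope p k S).extremePoints ℝ)
    (hπ : π = 0 ∨ π = 1) (htight : ∑ s ∈ S.disjSum S, y s = p - k)
    {s₀ : Fin n ⊕ Fin n} (hs₀ : s₀ ∈ S.disjSum S) (hfree : s₀ ∈ freeSlots y π) : False := by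
  classical
  obtain ⟨-, -, hy0, hycap, -, -⟩ := hw.1
  have hrest : ∀ s ∈ (S.disjSum S).erase s₀, y s = 0 ∨ y s = 1 := by
    intro s hs
    obtain ⟨hne, hsS⟩ := mem_erase.1 hs
    have hnfree : s ∉ freeSlots y π := fun h =>
      false_of_two_freeSlots hw hne h hfree (.inl (iff_of_true hsS hs₀))
    rw [mem_freeSlots] at hnfree
    rcases cap_eq_zero_or_one hπ s with hc | hc <;> rw [hc] at hnfree <;> tauto
  obtain ⟨N, hN⟩ := sum_eq_natCast_of_mem_zero_one hrest
  rw [← add_sum_erase _ _ hs₀, hN] at htight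
  obtain ⟨hne0, hnecap⟩ := mem_freeSlots.1 hfree
  have hpos : 0 < y s₀ := lt_of_le_of_ne (hy0 s₀) (Ne.symm hne0)
  have hlt : y s₀ < 1 := by
    rcases cap_eq_zero_or_one hπ s₀ with hc | hc
    · linarith [hycap s₀]
    · exact lt_of_le_of_ne (hc ▸ hycap s₀) (hc ▸ hnecap)
  have hint : ((p - k - N : ℤ) : ℝ) = y s₀ := by push_cast; linarith
  have h0 : (0 : ℤ) < p - k - N := by exact_mod_cast hint ▸ hpos
  have h1 : (p - k - N : ℤ) < 1 := by exact_mod_cast hint ▸ hlt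
  omega

theorem card_freeSlots_le_one (hw : (y, π) ∈ (polytope p k S).extremePoints ℝ) :
    (freeSlots y π).card ≤ 1 := by
  by_contra h
  obtain ⟨s₁, h₁, s₂, h₂, hne⟩ := one_lt_card.1 (not_le.1 h)
  by_cases hside : (s₁ ∈ S.disjSum S ↔ s₂ ∈ S.disjSum S) ∨ ∑ s ∈ S.disjSum S, y s ≠ p - k
  · exact false_of_two_freeSlots hw hne h₁ h₂ hside
  rw [not_or, not_iff, not_not] at hside
  obtain ⟨hside, htight⟩ := hside
  wlog hs₁ : s₁ ∈ S.disjSum S generalizing s₁ s₂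
  · exact this s₂ h₂ s₁ h₁ hne.symm (by tauto) (by tauto)
  have hs₂ : s₂ ∉ S.disjSum S := fun h => hside.2 h hs₁
  obtain ⟨hπ0, hπ1, -⟩ := hw.1
  rcases hπ0.eq_or_lt with hπ | hπ0
  · exact false_of_freeSlot_of_tight hw (.inl hπ.symm) htight hs₁ h₁
  rcases hπ1.eq_or_lt with hπ | hπ1
  · exact false_of_freeSlot_of_tight hw (.inr hπ) htight hs₁ h₁
  exact false_of_freeSlots_in_and_out hw hπ0 hπ1 h₁ h₂ hs₁ hs₂

lemma eq_cap_mul_of_notMem_freeSlots {s : Fin n ⊕ Fin n} (hs : s ∉ freeSlots y π) :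
    y s = cap π s * if y s = cap π s then 1 else 0 := by
  rw [mem_freeSlots, not_and_or, not_not, not_not] at hs
  split_ifs with h <;> simp_all

theorem exists_nat_div_eq_of_forall_notMem_freeSlots (hπ0 : 0 < π) (hπ1 : π < 1)
    {T : Finset (Fin n)} (hT : ∀ s ∈ T.disjSum T, s ∉ freeSlots y π)
    (hD : ∑ s ∈ T.disjSum T, capDirection y π s ≠ 0) {m : ℤ}
    (hm : ∑ s ∈ T.disjSum T, y s = m) :
    ∃ q r : ℕ, q ≤ n ∧ 1 ≤ r ∧ r ≤ n + 1 ∧ π = q / r := by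
  have hcount : ∀ f : Fin n → Fin n ⊕ Fin n,
      (T.filter fun i => y (f i) = cap π (f i)).card ≤ n :=
    fun f => (card_filter_le _ _).trans (card_le_univ T |>.trans_eq (Fintype.card_fin n))
  have hsumD : ∑ s ∈ T.disjSum T, capDirection y π s
      = (T.filter fun i => y (.inl i) = cap π (.inl i)).card
        - ((T.filter fun i => y (.inr i) = cap π (.inr i)).card : ℝ) := by
    simp only [sum_disjSum, capDirection, capSlope, Sum.elim_inl, Sum.elim_inr, ← mul_sum,
      sum_boole]
    ring
  have hsumy : ∑ s ∈ T.disjSum T, y s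
      = π * (T.filter fun i => y (.inl i) = cap π (.inl i)).card
        + (1 - π) * (T.filter fun i => y (.inr i) = cap π (.inr i)).card := by
    rw [sum_disjSum, sum_congr rfl fun i hi => eq_cap_mul_of_notMem_freeSlots
      (hT _ (inl_mem_disjSum.2 hi)), sum_congr rfl fun i hi => eq_cap_mul_of_notMem_freeSlots
      (hT _ (inr_mem_disjSum.2 hi))]
    change ∑ i ∈ T, π * _ + ∑ i ∈ T, (1 - π) * _ = _
    rw [← mul_sum, ← mul_sum, sum_boole, sum_boole]
  have hα := hcount .inl
  have hβ := hcount .inr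
  refine exists_nat_div_eq_of_mul_eq hπ0 hπ1 (N := n)
    (D := (T.filter fun i => y (.inl i) = cap π (.inl i)).card
      - ((T.filter fun i => y (.inr i) = cap π (.inr i)).card : ℤ))
    (M := m - (T.filter fun i => y (.inr i) = cap π (.inr i)).card) ?_ (by omega) ?_
  · intro h
    apply hD
    rw [hsumD]
    exact_mod_cast h
  · push_cast
    linarith

theorem exists_block_notMem_freeSlots (hw : (y, π) ∈ (polytope p k S).extremePoints ℝ)
    (hn : 0 < n) (hπ0 : 0 < π) (hπ1 : π < 1) :
    ∃ T : Finset (Fin n), (∀ s ∈ T.disjSum T, s ∉ freeSlots y π) ∧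
      ∑ s ∈ T.disjSum T, capDirection y π s ≠ 0 ∧ ∃ m : ℤ, ∑ s ∈ T.disjSum T, y s = m := by
  classical
  obtain ⟨-, -, -, -, hysum, -⟩ := hw.1
  have : Nonempty (Fin n ⊕ Fin n) := ⟨.inl ⟨0, hn⟩⟩
  obtain ⟨s₀, hs₀⟩ := card_le_one_iff_subset_singleton.1 (card_freeSlots_le_one hw)
  have hfree : ∀ s ≠ s₀, s ∉ freeSlots y π := fun s hs h => hs (mem_singleton.1 (hs₀ h))
  set D := ∑ s, capDirection y π s
  set DS := ∑ s ∈ S.disjSum S, capDirection y π s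
  by_cases hall : D ≠ 0 ∧ s₀ ∉ freeSlots y π
  · refine ⟨univ, fun s _ hs => ?_, by rw [univ_disjSum_univ]; exact hall.1, p,
      by rw [univ_disjSum_univ]; exact hysum⟩
    by_cases h : s = s₀
    · exact hall.2 (h ▸ hs)
    · exact hfree s h hs
  -- the cap direction, corrected at `s₀` to keep the total load, must break the side constraint
  have htight : ∑ s ∈ S.disjSum S, y s = p - k ∧
      DS - (if s₀ ∈ S.disjSum S then D else 0) ≠ 0 := by
    by_contra h
    refine false_of_capDirection_add hw hπ0 hπ1 (c := Pi.single s₀ (-D)) (fun s hs => ?_) ?_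
      fun ht => ?_
    · by_cases h : s = s₀
      · subst h
        by_contra hs'
        exact hall ⟨fun hD => hs (by simp [hD]), hs'⟩
      · simp [h] at hs
    · simp only [sum_add_distrib, sum_pi_single', mem_univ, if_true]
      ring
    · have h' := not_not.1 (not_and.1 h ht)
      simp only [sum_add_distrib, sum_pi_single']
      split_ifs at h' ⊢ <;> linarith
  by_cases hs₀S : s₀ ∈ S.disjSum S
  · refine ⟨Sᶜ, fun s hs => hfree s ?_, ?_, k, ?_⟩
    · rintro rfl
      exact mem_compl_disjSum_compl.1 hs hs₀S
    · rw [sum_compl_disjSum_compl]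
      simp only [hs₀S, if_true] at htight
      exact fun h => htight.2 (by linarith)
    · rw [sum_compl_disjSum_compl, hysum, htight.1]
      push_cast
      ring
  · refine ⟨S, fun s hs => hfree s ?_,
      by simpa only [hs₀S, if_false, sub_zero] using htight.2, p - k, ?_⟩
    · rintro rfl
      exact hs₀S hs
    · push_cast
      exact htight.1

theorem exists_eq_div_of_mem_extremePoints (hw : (y, π) ∈ (polytope p k S).extremePoints ℝ)
    (hn : 0 < n) : ∃ q r : ℕ, q ≤ n ∧ 1 ≤ r ∧ r ≤ n + 1 ∧ π = q / r := by
  have hπ0 : 0 ≤ π := hw.1.1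
  have hπ1 : π ≤ 1 := hw.1.2.1
  rcases hπ0.eq_or_lt with hπ | hπ0
  · exact ⟨0, 1, n.zero_le, le_rfl, by omega, by simp [← hπ]⟩
  rcases hπ1.eq_or_lt with hπ | hπ1
  · exact ⟨1, 1, hn, le_rfl, by omega, by simp [hπ]⟩
  obtain ⟨T, hT, hD, m, hm⟩ := exists_block_notMem_freeSlots hw hn hπ0 hπ1
  exact exists_nat_div_eq_of_forall_notMem_freeSlots hπ0 hπ1 hT hD hm

def slotCost (cl cu : Fin n → ℝ) (Γ : ℝ) :
    StrongDual ℝ ((Fin n ⊕ Fin n → ℝ) × ℝ) :=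
  ∑ s, Sum.elim cl cu s • (ContinuousLinearMap.proj s).comp (ContinuousLinearMap.fst ℝ _ ℝ) +
    Γ • ContinuousLinearMap.snd ℝ _ ℝ

lemma slotCost_apply (cl cu : Fin n → ℝ) (Γ : ℝ) (w : (Fin n ⊕ Fin n → ℝ) × ℝ) :
    slotCost cl cu Γ w = ∑ s, Sum.elim cl cu s * w.1 s + Γ * w.2 := by
  simp [slotCost]

def toSlots (z zb : Fin n → ℝ) (π : ℝ) : Fin n ⊕ Fin n → ℝ :=
  Sum.elim (fun i => π * z i) (fun i => (1 - π) * zb i)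

lemma sum_toSlots (T : Finset (Fin n)) (z zb : Fin n → ℝ) (π : ℝ) :
    ∑ s ∈ T.disjSum T, toSlots z zb π s = ∑ i ∈ T, (π * z i + (1 - π) * zb i) := by
  simp [toSlots, sum_disjSum, sum_add_distrib]

lemma obj8_eq_add_slotCost (C cl cu : Fin n → ℝ) (Γ : ℝ) (x z zb : Fin n → ℝ) (π : ℝ) :
    Obj8 n C cl cu Γ x z zb π = ∑ i, C i * x i + slotCost cl cu Γ (toSlots z zb π, π) := by
  simp only [Obj8, slotCost_apply, ← univ_disjSum_univ, sum_disjSum, toSlots, Sum.elim_inl,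
    Sum.elim_inr, mul_sum]
  rw [sum_congr rfl fun i _ => mul_left_comm π (cl i) (z i),
    sum_congr rfl fun i _ => mul_left_comm (1 - π) (cu i) (zb i)]
  ring

def selected (x : Fin n → ℝ) : Finset (Fin n) := univ.filter (x · = 1)

lemma sum_mul_eq_sum_selected {x : Fin n → ℝ} (hx : ∀ i, x i = 0 ∨ x i = 1) (f : Fin n → ℝ) :
    ∑ i, x i * f i = ∑ i ∈ selected x, f i := by
  rw [selected, sum_filter]
  refine sum_congr rfl fun i _ => ?_
  rcases hx i with h | h <;> simp [h]

theorem toSlots_mem_polytope {x z zb : Fin n → ℝ} (h : Feas8 n p k x z zb π) :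
    (toSlots z zb π, π) ∈ polytope p k (selected x) := by
  obtain ⟨hx, -, hz, hzb, hπ, hsum, hside⟩ := h
  refine ⟨hπ.1, hπ.2, ?_, ?_, ?_, ?_⟩
  · rintro (i | i)
    · exact mul_nonneg hπ.1 (hz i).1
    · exact mul_nonneg (sub_nonneg.2 hπ.2) (hzb i).1
  · rintro (i | i)
    · exact mul_le_of_le_one_right hπ.1 (hz i).2
    · exact mul_le_of_le_one_right (sub_nonneg.2 hπ.2) (hzb i).2
  · rwa [← univ_disjSum_univ, sum_toSlots]
  · rwa [sum_toSlots, ← sum_mul_eq_sum_selected hx]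

/-- When `π` or `1 - π` vanishes, so do the slots it bounds, and the junk value `a / 0 = 0`
still recovers them. -/
lemma toSlots_div (hw : (y, π) ∈ polytope p k S) :
    toSlots (fun i => y (.inl i) / π) (fun i => y (.inr i) / (1 - π)) π = y := by
  obtain ⟨-, -, hy0, hycap, -, -⟩ := hw
  funext s
  rcases s with i | i
  · exact mul_div_cancel_of_imp' fun h => le_antisymm (h ▸ hycap (.inl i)) (hy0 _)
  · exact mul_div_cancel_of_imp' fun h => le_antisymm (h ▸ hycap (.inr i)) (hy0 _)

theorem feas8_of_mem_polytope {x : Fin n → ℝ} (hx : ∀ i, x i = 0 ∨ x i = 1)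
    (hxsum : ∑ i, x i = p) (hw : (y, π) ∈ polytope p k (selected x)) :
    Feas8 n p k x (fun i => y (.inl i) / π) (fun i => y (.inr i) / (1 - π)) π := by
  have hy := toSlots_div hw
  obtain ⟨hπ0, hπ1, hy0, hycap, hysum, hyS⟩ := hw
  refine ⟨hx, hxsum, fun i => ⟨div_nonneg (hy0 _) hπ0, div_le_one_of_le₀ (hycap (.inl i)) hπ0⟩,
    fun i => ⟨div_nonneg (hy0 _) (sub_nonneg.2 hπ1),
      div_le_one_of_le₀ (hycap (.inr i)) (sub_nonneg.2 hπ1)⟩, ⟨hπ0, hπ1⟩, ?_, ?_⟩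
  · rwa [← sum_toSlots, univ_disjSum_univ, hy]
  · rwa [sum_mul_eq_sum_selected hx, ← sum_toSlots, hy]

theorem feas8_self {x : Fin n → ℝ} (hx : ∀ i, x i = 0 ∨ x i = 1) (hxsum : ∑ i, x i = p) :
    Feas8 n p k x x x 0 := by
  have hxx : ∀ i, x i * x i = x i := fun i => by rcases hx i with h | h <;> simp [h]
  refine ⟨hx, hxsum, fun i => ?_, fun i => ?_, ⟨le_rfl, zero_le_one⟩, by simpa using hxsum, ?_⟩
  · rcases hx i with h | h <;> simp [h]
  · rcases hx i with h | h <;> simp [h]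
  · simp [hxx, hxsum]

theorem card_fractional_le_card_freeSlots :
    (univ.filter fun i => 0 < y (.inl i) / π ∧ y (.inl i) / π < 1).card +
      (univ.filter fun i => 0 < y (.inr i) / (1 - π) ∧ y (.inr i) / (1 - π) < 1).card ≤
    (freeSlots y π).card := by
  rw [← card_disjSum]
  refine card_le_card fun s hs => mem_freeSlots.2 ?_
  rcases s with i | i <;> simp only [inl_mem_disjSum, inr_mem_disjSum, mem_filter, mem_univ,
    true_and] at hs <;> exact ne_zero_and_ne_of_div_mem_Ioo hs

end RecoverableSelection

open RecoverableSelection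

theorem stmt8_general (n p k : ℕ) (hp1 : 1 ≤ p) (hpn : p ≤ n)
    (C cl cu : Fin n → ℝ) (Γ : ℝ) :
    ∃ x z zb : Fin n → ℝ, ∃ π : ℝ, Feas8 n p k x z zb π ∧
      (∀ x' z' zb' : Fin n → ℝ, ∀ π' : ℝ, Feas8 n p k x' z' zb' π' →
        Obj8 n C cl cu Γ x z zb π ≤ Obj8 n C cl cu Γ x' z' zb' π') ∧
      ((Finset.univ.filter fun i => 0 < z i ∧ z i < 1).card +
        (Finset.univ.filter fun i => 0 < zb i ∧ zb i < 1).card ≤ 1) ∧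
      (∃ q r : ℕ, q ≤ n ∧ 1 ≤ r ∧ r ≤ n + 1 ∧ π = (q : ℝ) / (r : ℝ)) := by
  set X : Set (Fin n → ℝ) := {x | (∀ i, x i = 0 ∨ x i = 1) ∧ ∑ i, x i = p}
  have hX : X.Finite :=
    (Set.Finite.pi fun _ => Set.toFinite {0, 1}).subset fun x hx i _ => hx.1 i
  have hXne : X.Nonempty := by
    obtain ⟨S, -, hS⟩ := exists_subset_card_eq (s := (univ : Finset (Fin n))) (by simpa using hpn)
    exact ⟨fun i => if i ∈ S then 1 else 0, fun i => by by_cases h : i ∈ S <;> simp [h],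
      by simp [hS]⟩
  have hbest : ∀ x ∈ X, ∃ w ∈ (polytope p k (selected x)).extremePoints ℝ,
      IsMinOn (slotCost cl cu Γ) (polytope p k (selected x)) w := fun x hx =>
    (isCompact_polytope p k _).exists_mem_extremePoints_isMinOn
      ⟨_, toSlots_mem_polytope (feas8_self hx.1 hx.2)⟩ _
  choose! w hw hmin using hbest
  obtain ⟨x, hx, hxmin⟩ :=
    X.exists_min_image (fun x => ∑ i, C i * x i + slotCost cl cu Γ (w x)) hX hXne
  refine ⟨x, _, _, _, feas8_of_mem_polytope hx.1 hx.2 (hw x hx).1, fun x' z' zb' π' h' => ?_,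
    card_fractional_le_card_freeSlots.trans (card_freeSlots_le_one (hw x hx)),
    exists_eq_div_of_mem_extremePoints (hw x hx) (by omega)⟩
  have hx' : x' ∈ X := ⟨h'.1, h'.2.1⟩
  rw [obj8_eq_add_slotCost, obj8_eq_add_slotCost, toSlots_div (hw x hx).1]
  calc ∑ i, C i * x i + slotCost cl cu Γ (w x)
      ≤ ∑ i, C i * x' i + slotCost cl cu Γ (w x') := hxmin x' hx'
    _ ≤ ∑ i, C i * x' i + slotCost cl cu Γ (toSlots z' zb' π', π') :=
      (add_le_add_iff_left _).2 (hmin x' hx' (toSlots_mem_polytope h'))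

/-- Lemma 1: there is an optimal solution of (13) with at most one fractional
`z`/`z̄` variable and `π` of the form `q/r`, `q ∈ {0,…,n}`, `r ∈ {1,…,n+1}`. -/
theorem stmt8 (n p k : ℕ) (hp1 : 1 ≤ p) (hpn : p ≤ n) (hk : k ≤ p)
    (C cl cu : Fin n → ℝ) (hC : ∀ i, 0 ≤ C i) (hcl : ∀ i, 0 ≤ cl i)
    (hcu : ∀ i, cl i ≤ cu i) (Γ : ℝ) (hΓ : 0 ≤ Γ) :
    ∃ x z zb : Fin n → ℝ, ∃ π : ℝ, Feas8 n p k x z zb π ∧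
      (∀ x' z' zb' : Fin n → ℝ, ∀ π' : ℝ, Feas8 n p k x' z' zb' π' →
        Obj8 n C cl cu Γ x z zb π ≤ Obj8 n C cl cu Γ x' z' zb' π') ∧
      ((Finset.univ.filter fun i => 0 < z i ∧ z i < 1).card +
        (Finset.univ.filter fun i => 0 < zb i ∧ zb i < 1).card ≤ 1) ∧
      (∃ q r : ℕ, q ≤ n ∧ 1 ≤ r ∧ r ≤ n + 1 ∧ π = (q : ℝ) / (r : ℝ)) :=
  stmt8_general n p k hp1 hpn C cl cu Γ
end
end

section
/- Let n ≥ 1 and let M be the (4n+5) × 5n real matrix whose columns are indexed by five consecutive blocks of size n (the x-block, z-block, z̄-block, z'-block, z̄'-block) and whose rows are: row a₁ with entry 1 in every x-column and 0 elsewhere; row a₂ with entry 1 in every z-column and 0 elsewhere; row a₃ with entry 1 in every z̄-column and 0 elsewhere; row a₄ with entry 1 in every z'-column and 0 elsewhere; row a₅ with entry 1 in every z̄'-column and 0 elsewhere; for each i ∈ [n], row b_i with entry 1 in the i-th x-column and −1 in the i-th z'-column and 0 elsewhere; row c_i with entry 1 in the i-th z-column and −1 in the i-th z'-column and 0 elsewhere;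 row d_i with entry 1 in the i-th x-column and −1 in the i-th z̄'-column and 0 elsewhere; row e_i with entry 1 in the i-th z̄-column and −1 in the i-th z̄'-column and 0 elsewhere. Then M is totally unimodular. -/
noncomputable section

/-- The coefficient matrix of problem (14) (Table 2).  Columns are five blocks
of size `n`: the `x`-block (`0 ≤ c < n`), the `z`-block (`n ≤ c < 2n`), the
`z̄`-block (`2n ≤ c < 3n`), the `z'`-block (`3n ≤ c < 4n`) and the `z̄'`-block
(`4n ≤ c < 5n`).  Rows are `a₁,…,a₅` followed by the blocks `b_i`, `c_i`,
`d_i`, `e_i` for `i ∈ [n]`. -/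
def M9 (n : ℕ) : Matrix (Fin (4 * n + 5)) (Fin (5 * n)) ℝ := fun r c =>
  if r.val = 0 then (if c.val < n then 1 else 0)
  else if r.val = 1 then (if n ≤ c.val ∧ c.val < 2 * n then 1 else 0)
  else if r.val = 2 then (if 2 * n ≤ c.val ∧ c.val < 3 * n then 1 else 0)
  else if r.val = 3 then (if 3 * n ≤ c.val ∧ c.val < 4 * n then 1 else 0)
  else if r.val = 4 then (if 4 * n ≤ c.val then 1 else 0)
  else if r.val < 5 + n then
    -- row `b_i` with `i = r.val - 5`
    (if c.val = r.val - 5 then 1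
     else if c.val = 3 * n + (r.val - 5) then -1 else 0)
  else if r.val < 5 + 2 * n then
    -- row `c_i` with `i = r.val - 5 - n`
    (if c.val = n + (r.val - 5 - n) then 1
     else if c.val = 3 * n + (r.val - 5 - n) then -1 else 0)
  else if r.val < 5 + 3 * n then
    -- row `d_i` with `i = r.val - 5 - 2n`
    (if c.val = r.val - 5 - 2 * n then 1
     else if c.val = 4 * n + (r.val - 5 - 2 * n) then -1 else 0)
  else
    -- row `e_i` with `i = r.val - 5 - 3n`
    (if c.val = 2 * n + (r.val - 5 - 3 * n) then 1
     else if c.val = 4 * n + (r.val - 5 - 3 * n) then -1 else 0)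

/-!
`M9` is a row and column selection of `pathBlockMatrix`: disjoint copies of the path
`z – z' – x – z̄' – z̄`, whose edges are the rows `c, b, d, e`, together with one row per path
position summing that position over all copies. This matrix passes the Ghouila-Houri test with
an explicit colouring: given a set `S` of rows, walk along the path carrying a sign that flips
after each position whose block row lies in `S`. A block row gets the sign at its position and
the edge `{p, p + 1}` of every copy gets `(-1) ^ p` times the sign after `p`; every column sum is
then `0` or `±` the sign at its position.
-/

lemma Int.mem_range_signTypeCast_iff_abs_le_one {x : ℤ} :
    x ∈ Set.range SignType.cast ↔ |x| ≤ 1 := by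
  constructor
  · rintro ⟨s, rfl⟩
    cases s <;> simp
  · intro hx
    obtain rfl | rfl | rfl : x = -1 ∨ x = 0 ∨ x = 1 := by rw [abs_le] at hx; omega
    exacts [⟨-1, rfl⟩, ⟨0, rfl⟩, ⟨1, rfl⟩]

namespace Matrix

variable {m n : Type*}

lemma IsTotallyUnimodular.map_intCast {R : Type*} [CommRing R] {A : Matrix m n ℤ}
    (hA : A.IsTotallyUnimodular) : (A.map (Int.cast : ℤ → R)).IsTotallyUnimodular := by
  intro k f g hf hg
  obtain ⟨s, hs⟩ := hA k f g hf hg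
  exact ⟨s, by rw [submatrix_map, ← Int.cast_det, ← hs, SignType.intCast_cast]⟩

/-- Camion's parity argument: `l ≡ z (mod 2)` forces `l ᵥ* B` to vanish off `j₀`, so `l` is
proportional to `z` and `det B` is bounded by the `j₀`-entry of `l ᵥ* B`. -/
lemma abs_det_le_one_of_vecMul_eq_single {ι : Type*} [Fintype ι] [DecidableEq ι]
    (B : Matrix ι ι ℤ) (z l : ι → ℤ) (j₀ : ι) (hz : z ᵥ* B = Pi.single j₀ B.det)
    (hz_abs : ∀ i, |z i| ≤ 1) (hlz : ∀ i, Even (l i - z i)) (hl : ∀ j, |(l ᵥ* B) j| ≤ 1) :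
    |B.det| ≤ 1 := by
  by_cases hdet : B.det = 0
  · simp [hdet]
  have hl_single : l ᵥ* B = Pi.single j₀ ((l ᵥ* B) j₀) := by
    funext j
    by_cases hj : j = j₀
    · subst hj; simp
    have heven : Even ((l ᵥ* B) j) := by
      have hsplit : (l ᵥ* B) j = ((l - z) ᵥ* B) j + (z ᵥ* B) j := by simp [sub_vecMul]
      rw [hsplit, hz, Pi.single_eq_of_ne hj, add_zero]
      exact Finset.even_sum _ fun i _ => (hlz i).mul_right _
    obtain ⟨a, ha⟩ := heven
    have := hl j
    rw [abs_le] at this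
    rw [Pi.single_eq_of_ne hj]
    omega
  set u := (l ᵥ* B) j₀
  have hkernel : (u • z - B.det • l) ᵥ* B = 0 := by
    rw [sub_vecMul, smul_vecMul, smul_vecMul, hz, hl_single]
    funext j
    by_cases hj : j = j₀ <;> simp [hj, mul_comm]
  have hrel : u • z = B.det • l := by
    by_contra h
    exact hdet (exists_vecMul_eq_zero_iff.mp ⟨_, sub_ne_zero.mpr h, hkernel⟩)
  obtain ⟨i₀, hi₀⟩ : ∃ i, z i ≠ 0 := by
    by_contra! h
    rw [show z = 0 from funext h, zero_vecMul] at hz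
    exact hdet (by simpa using (congrFun hz j₀).symm)
  have hl₀ : l i₀ ≠ 0 := by
    obtain ⟨a, ha⟩ := hlz i₀
    have := hz_abs i₀
    rw [abs_le] at this
    omega
  calc |B.det| ≤ |B.det * l i₀| := by
        rw [abs_mul]; exact le_mul_of_one_le_right (abs_nonneg _) (Int.one_le_abs hl₀)
    _ = |u| * |z i₀| := by rw [← abs_mul]; exact congrArg abs (congrFun hrel i₀).symm
    _ ≤ 1 := by nlinarith [hl j₀, hz_abs i₀, abs_nonneg u, abs_nonneg (z i₀)]

/-- The sufficient direction of the Ghouila-Houri criterion. -/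
theorem isTotallyUnimodular_of_forall_exists_balanced_coloring (A : Matrix m n ℤ)
    (hA : ∀ S : Finset m, ∃ l : m → ℤ,
      (∀ r ∈ S, |l r| = 1) ∧ ∀ c, |∑ r ∈ S, l r * A r c| ≤ 1) :
    A.IsTotallyUnimodular := by
  classical
  suffices ∀ k (f : Fin k → m) (g : Fin k → n), f.Injective → g.Injective →
      |(A.submatrix f g).det| ≤ 1 from
    fun k f g hf hg => Int.mem_range_signTypeCast_iff_abs_le_one.mpr (this k f g hf hg)
  intro k
  induction k with
  | zero => simp
  | succ k ih =>
    intro f g hf hg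
    set B := A.submatrix f g
    set z := B.adjugate 0
    have hz : z ᵥ* B = Pi.single 0 B.det := by
      funext j
      have h := congrFun (congrFun (adjugate_mul B) 0) j
      rw [smul_apply, one_apply, smul_ite, smul_zero, smul_eq_mul, mul_one] at h
      exact h.trans (by simp [Pi.single_apply, eq_comm])
    have hz_abs : ∀ i, |z i| ≤ 1 := by
      intro i
      change |B.adjugate 0 i| ≤ 1
      rw [adjugate_fin_succ_eq_det_submatrix, abs_mul, abs_pow, abs_neg, abs_one, one_pow, one_mul]
      exact ih _ _ (hf.comp Fin.succAbove_right_injective) (hg.comp Fin.succAbove_right_injective)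
    obtain ⟨c, hc_abs, hc⟩ := hA ((Finset.univ.filter (z · ≠ 0)).image f)
    refine abs_det_le_one_of_vecMul_eq_single B z (fun i => if z i = 0 then 0 else c (f i)) 0
      hz hz_abs (fun i => ?_) (fun j => ?_)
    · by_cases hzi : z i = 0
      · simp [hzi]
      have h₁ := hc_abs (f i) (Finset.mem_image_of_mem f (by simpa using hzi))
      have h₂ := hz_abs i
      rw [abs_eq zero_le_one] at h₁
      rw [abs_le] at h₂
      rw [if_neg hzi, Int.even_iff]
      omega
    · convert hc (g j) using 2
      rw [Finset.sum_image (fun _ _ _ _ h => hf h), Finset.sum_filter]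
      simp only [vecMul, dotProduct]
      refine Finset.sum_congr rfl fun i _ => ?_
      by_cases hzi : z i = 0 <;> simp [hzi, B]

section PathBlock

variable {ι : Type*} [DecidableEq ι]

variable (ι) in
def pathBlockMatrix : Matrix (ℕ ⊕ ℕ × ι) (ℕ × ι) ℤ
  | .inl p, (q, _) => if p = q then 1 else 0
  | .inr (p, i), (q, j) => if i = j ∧ (q = p ∨ q = p + 1) then (-1) ^ q else 0

variable (S : Finset (ℕ ⊕ ℕ × ι))

def blockSign (q : ℕ) : ℤ :=
  (-1) ^ ((Finset.range q).filter (fun p => Sum.inl p ∈ S)).card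

lemma blockSign_eq_one_or_eq_neg_one (q : ℕ) :
    blockSign S q = 1 ∨ blockSign S q = -1 :=
  neg_one_pow_eq_or ℤ _

lemma blockSign_succ (q : ℕ) :
    blockSign S (q + 1) = if Sum.inl q ∈ S then -blockSign S q else blockSign S q := by
  unfold blockSign
  rw [Finset.range_add_one, Finset.filter_insert]
  split_ifs with hq
  · rw [Finset.card_insert_of_notMem (by simp), pow_succ, mul_neg_one]
  · rfl

def pathColoring : ℕ ⊕ ℕ × ι → ℤ
  | .inl q => blockSign S q
  | .inr (p, _) => (-1) ^ p * blockSign S (p + 1)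

lemma abs_pathColoring (r : ℕ ⊕ ℕ × ι) : |pathColoring S r| = 1 := by
  rcases r with q | ⟨p, i⟩
  · rcases blockSign_eq_one_or_eq_neg_one S q with h | h <;> simp [pathColoring, h]
  · rcases blockSign_eq_one_or_eq_neg_one S (p + 1) with h | h <;> simp [pathColoring, h]

lemma pathColoring_mul_pathBlockMatrix (r : ℕ ⊕ ℕ × ι) (q : ℕ) (j : ι) :
    pathColoring S r * pathBlockMatrix ι r (q, j) =
      (if r = .inl q then blockSign S q else 0)
        + (if r = .inr (q, j) then blockSign S (q + 1) else 0)
        - (if r = .inr (q - 1, j) ∧ q ≠ 0 then blockSign S q else 0) := by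
  rcases r with p | ⟨p, i⟩
  · by_cases hpq : p = q <;> simp [pathColoring, pathBlockMatrix, hpq]
  · by_cases hij : i = j
    · subst hij
      by_cases hqp : q = p
      · subst hqp
        have hnot_left : ¬(q = q - 1 ∧ q ≠ 0) := by omega
        simp [pathColoring, pathBlockMatrix, hnot_left, mul_right_comm _ _ ((-1 : ℤ) ^ q),
          ← pow_add, ← two_mul, pow_mul]
      by_cases hqp₁ : q = p + 1
      · subst hqp₁
        simp [pathColoring, pathBlockMatrix, pow_succ, mul_right_comm _ _ ((-1 : ℤ) ^ p),
          ← pow_add, ← two_mul, pow_mul]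
      · have hnot_left : ¬(p = q - 1 ∧ q ≠ 0) := by omega
        simp [pathBlockMatrix, hqp, hqp₁, Ne.symm hqp, hnot_left]
    · simp [pathBlockMatrix, hij]

lemma sum_pathColoring_mul_pathBlockMatrix (q : ℕ) (j : ι) :
    ∑ r ∈ S, pathColoring S r * pathBlockMatrix ι r (q, j) =
      (if .inl q ∈ S then blockSign S q else 0)
        + (if .inr (q, j) ∈ S then blockSign S (q + 1) else 0)
        - (if .inr (q - 1, j) ∈ S ∧ q ≠ 0 then blockSign S q else 0) := by
  simp only [pathColoring_mul_pathBlockMatrix, Finset.sum_sub_distrib, Finset.sum_add_distrib,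
    ite_and, Finset.sum_ite_eq']

theorem pathBlockMatrix_isTotallyUnimodular : (pathBlockMatrix ι).IsTotallyUnimodular := by
  refine isTotallyUnimodular_of_forall_exists_balanced_coloring _ fun S =>
    ⟨pathColoring S, fun r _ => abs_pathColoring S r, fun ⟨q, j⟩ => ?_⟩
  rw [sum_pathColoring_mul_pathBlockMatrix, blockSign_succ]
  rcases blockSign_eq_one_or_eq_neg_one S q with h | h <;> rw [h] <;> split_ifs <;> norm_num

end PathBlock

end Matrix

open Matrix

/-- Positions on the path `z – z' – x – z̄' – z̄` of the column blocks `x, z, z̄, z', z̄'`. -/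
def m9BlockPosition : ℕ → ℕ
  | 0 => 2
  | 1 => 0
  | 2 => 4
  | 3 => 1
  | _ => 3

/-- Left endpoints on the same path of the edges `b, c, d, e`. -/
def m9EdgePosition : ℕ → ℕ
  | 0 => 1
  | 1 => 0
  | 2 => 2
  | _ => 3

lemma M9_apply_block_row (n r k i : ℕ) (hr : r < 5) (hk : k < 5) (hi : i < n)
    (hr' : r < 4 * n + 5) (hc : n * k + i < 5 * n) :
    M9 n ⟨r, hr'⟩ ⟨n * k + i, hc⟩ =
      pathBlockMatrix ℕ (.inl (m9BlockPosition r)) (m9BlockPosition k, i) := by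
  interval_cases r <;> interval_cases k <;> simp [M9, pathBlockMatrix, m9BlockPosition] <;> omega

lemma M9_apply_edge_row (n w j k i : ℕ) (hw : w < 4) (hj : j < n) (hk : k < 5) (hi : i < n)
    (hr : 5 + (n * w + j) < 4 * n + 5) (hc : n * k + i < 5 * n) :
    M9 n ⟨5 + (n * w + j), hr⟩ ⟨n * k + i, hc⟩ =
      pathBlockMatrix ℕ (.inr (m9EdgePosition w, j)) (m9BlockPosition k, i) := by
  interval_cases w <;> interval_cases k <;>
    simp (disch := omega) only [M9, pathBlockMatrix, m9BlockPosition, m9EdgePosition, if_pos,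
      if_neg, or_true, true_or, and_true]
    <;> (try split_ifs) <;> first | omega | norm_num

lemma M9_eq_submatrix_pathBlockMatrix (n : ℕ) :
    M9 n = ((pathBlockMatrix ℕ).map (Int.cast : ℤ → ℝ)).submatrix
      (fun r : Fin (4 * n + 5) => if r.val < 5 then .inl (m9BlockPosition r)
        else .inr (m9EdgePosition ((r - 5) / n), (r - 5) % n))
      (fun c : Fin (5 * n) => (m9BlockPosition (c / n), c % n)) := by
  ext ⟨r, hr⟩ ⟨c, hc⟩
  have hn : 0 < n := by omega
  obtain ⟨k, i, hk, hi, rfl⟩ : ∃ k i, k < 5 ∧ i < n ∧ c = n * k + i :=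
    ⟨c / n, c % n, Nat.div_lt_of_lt_mul (by omega), Nat.mod_lt _ hn, (Nat.div_add_mod c n).symm⟩
  have hdiv : (n * k + i) / n = k := by rw [Nat.mul_add_div hn, Nat.div_eq_of_lt hi, add_zero]
  have hmod : (n * k + i) % n = i := by rw [Nat.mul_add_mod, Nat.mod_eq_of_lt hi]
  simp only [submatrix_apply, map_apply, hdiv, hmod]
  by_cases hr5 : r < 5
  · rw [if_pos hr5, M9_apply_block_row n r k i hr5 hk hi]
  · rw [if_neg hr5]
    obtain ⟨w, j, hw, hj, rfl⟩ : ∃ w j, w < 4 ∧ j < n ∧ r = 5 + (n * w + j) :=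
      ⟨(r - 5) / n, (r - 5) % n, Nat.div_lt_of_lt_mul (by omega), Nat.mod_lt _ hn,
        by rw [Nat.div_add_mod]; omega⟩
    rw [Nat.add_sub_cancel_left, Nat.mul_add_div hn, Nat.div_eq_of_lt hj, add_zero,
      Nat.mul_add_mod, Nat.mod_eq_of_lt hj, M9_apply_edge_row n w j k i hw hj hk hi]

theorem stmt9_general (n : ℕ) : (M9 n).IsTotallyUnimodular := by
  rw [M9_eq_submatrix_pathBlockMatrix]
  exact pathBlockMatrix_isTotallyUnimodular.map_intCast.submatrix _ _

/-- The coefficient matrix of problem (14) is totally unimodular. -/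
theorem stmt9 (n : ℕ) (hn : 1 ≤ n) : (M9 n).IsTotallyUnimodular :=
  stmt9_general n
end
end

section
/- Let n, p be integers with 1 ≤ p ≤ n, and let C, c̲, c̄ ∈ ℝ^n_{≥0} with c̲_i ≤ c̄_i for all i, and Γ ≥ 0. Consider the optimization problem: minimize Σ_i C_i·x_i + π·Σ_i c̲_i·z_i + (1−π)·Σ_i c̄_i·z̄_i + Γ·π over x ∈ {0,1}^n, z, z̄ ∈ [0,1]^n and π ∈ [0,1], subject to Σ_i (x_i + π·z_i + (1−π)·z̄_i) = p, x_i + z_i ≤ 1 for all i, and x_i + z̄_i ≤ 1 for all i. Then there exists an optimal solution (x, z, z̄, π) such that z_i, z̄_i ∈ {0,1} for all i ∈ [n], and π = q/r for some integers q ∈ {0,…,p} and r ∈ {1,…,n}. -/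
open Finset

noncomputable section

/-- Feasibility for the rescaled R2ST formulation (problem (18)). -/
def Feas10 (n p : ℕ) (x z zb : Fin n → ℝ) (π : ℝ) : Prop :=
  (∀ i, x i = 0 ∨ x i = 1) ∧
  (∀ i, z i ∈ Set.Icc (0 : ℝ) 1) ∧ (∀ i, zb i ∈ Set.Icc (0 : ℝ) 1) ∧
  π ∈ Set.Icc (0 : ℝ) 1 ∧
  (∑ i, (x i + π * z i + (1 - π) * zb i)) = (p : ℝ) ∧
  (∀ i, x i + z i ≤ 1) ∧ (∀ i, x i + zb i ≤ 1)

/-- Objective of the rescaled R2ST formulation (problem (18)). -/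
def Obj10 (n : ℕ) (C cl cu : Fin n → ℝ) (Γ : ℝ) (x z zb : Fin n → ℝ) (π : ℝ) : ℝ :=
  (∑ i, C i * x i) + π * (∑ i, cl i * z i) + (1 - π) * (∑ i, cu i * zb i) + Γ * π

/-!
Fix the binary vector `x` and call `m i = π * z i + (1 - π) * zb i` the level of coordinate `i`;
it ranges over `[0, 1 - x i]` and the levels sum to `p - ∑ x`. Since `cl ≤ cu`, a level is
realised most cheaply by filling `z i` before `zb i`, at cost
`cl i * min (m i) π + cu i * max (m i - π) 0`, which is affine in `(m i, π)` as long as `m i` stays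
on one side of `π`. On each such piece the problem is a linear program. For fixed `π`, moving mass
between two levels strictly inside their pieces leaves at most one free level; then sliding `π`
(levels equal to `π` follow it, the free level compensates) is linear until a new breakpoint is
reached. At the end every level is `0`, `π` or `1`, i.e. `(z i, zb i)` is `(0, 0)`, `(1, 0)` or
`(1, 1)`, and either `π ∈ {0, 1}` or `∑ x + A + B π = p` with `B ≥ 1` levels equal to `π`, so
`π = q / B` with `q ≤ p`. There are finitely many such points, and the best of them is optimal.
-/

theorem exists_le_tight_of_affine (L : Finset (ℝ × ℝ)) {t₀ : ℝ}
    (h₀ : ∀ l ∈ L, 0 ≤ l.1 + l.2 * t₀) (hpos : ∃ l ∈ L, 0 < l.2) :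
    ∃ t ≤ t₀, (∀ l ∈ L, 0 ≤ l.1 + l.2 * t) ∧ ∃ l ∈ L, l.2 ≠ 0 ∧ l.1 + l.2 * t = 0 := by
  obtain ⟨l, hl, hmax⟩ := (L.filter (0 < ·.2)).exists_max_image (fun l => -l.1 / l.2)
    (by simpa [Finset.Nonempty] using hpos)
  rw [mem_filter] at hl
  obtain ⟨hlL, hl2⟩ := hl
  refine ⟨-l.1 / l.2, ?_, fun l' hl' => ?_, l, hlL, hl2.ne', by field_simp; ring⟩
  · rw [div_le_iff₀ hl2]; linarith [h₀ l hlL]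
  · rcases lt_or_ge 0 l'.2 with h | h
    · have := hmax l' (mem_filter.2 ⟨hl', h⟩)
      rw [div_le_iff₀ h] at this
      linarith
    · have ht : -l.1 / l.2 ≤ t₀ := by rw [div_le_iff₀ hl2]; linarith [h₀ l hlL]
      nlinarith [h₀ l' hl']

theorem exists_tight_of_affine (L : Finset (ℝ × ℝ)) {t₀ : ℝ} (c : ℝ)
    (h₀ : ∀ l ∈ L, 0 ≤ l.1 + l.2 * t₀) (hpos : ∃ l ∈ L, 0 < l.2) (hneg : ∃ l ∈ L, l.2 < 0) :
    ∃ t, (∀ l ∈ L, 0 ≤ l.1 + l.2 * t) ∧ c * t ≤ c * t₀ ∧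
      ∃ l ∈ L, l.2 ≠ 0 ∧ l.1 + l.2 * t = 0 := by
  rcases le_total 0 c with hc | hc
  · obtain ⟨t, ht, hL, htight⟩ := exists_le_tight_of_affine L h₀ hpos
    exact ⟨t, hL, mul_le_mul_of_nonneg_left ht hc, htight⟩
  · have hflip : ∀ l ∈ L, (l.1, -l.2) ∈ L.image fun l => (l.1, -l.2) :=
      fun l hl => mem_image_of_mem _ hl
    obtain ⟨t, ht, hL, l, hl, hl2, htight⟩ := exists_le_tight_of_affine
      (L.image fun l => (l.1, -l.2)) (t₀ := -t₀)
      (forall_mem_image.2 fun l hl => by linarith [h₀ l hl])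
      (by obtain ⟨l, hl, h⟩ := hneg; exact ⟨_, hflip l hl, neg_pos.2 h⟩)
    obtain ⟨l', hl', rfl⟩ := mem_image.1 hl
    refine ⟨-t, fun l hl => ?_, by nlinarith, l', hl', by simpa using hl2, by linarith⟩
    linarith [hL _ (hflip l hl)]

section Box

variable {ι : Type*} [Fintype ι]

def freeCoords (a b y : ι → ℝ) : Finset ι :=
  univ.filter fun i => y i ≠ a i ∧ y i ≠ b i

theorem exists_transfer_le (c a b y : ι → ℝ) (hy : ∀ i, y i ∈ Set.Icc (a i) (b i)) {i j : ι}
    (hij : i ≠ j) (hi : i ∈ freeCoords a b y) (hj : j ∈ freeCoords a b y) :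
    ∃ y' : ι → ℝ, (∀ i, y' i ∈ Set.Icc (a i) (b i)) ∧ ∑ i, y' i = ∑ i, y i ∧
      ∑ i, c i * y' i ≤ ∑ i, c i * y i ∧ freeCoords a b y' ⊂ freeCoords a b y := by
  classical
  simp only [freeCoords, mem_filter, mem_univ, true_and] at hi hj
  obtain ⟨t, hL, hc, l, hl, hl2, htight⟩ := exists_tight_of_affine
    {(y i - a i, 1), (b i - y i, -1), (y j - a j, -1), (b j - y j, 1)} (t₀ := 0) (c i - c j)
    (by simp only [mem_insert, mem_singleton, forall_eq_or_imp, forall_eq]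
        refine ⟨?_, ?_, ?_, ?_⟩ <;> linarith [(hy i).1, (hy i).2, (hy j).1, (hy j).2])
    ⟨(y i - a i, 1), by simp, one_pos⟩ ⟨(b i - y i, -1), by simp, by norm_num⟩
  simp only [mem_insert, mem_singleton, forall_eq_or_imp, forall_eq] at hL
  set d : ι → ℝ := fun l => (if l = i then 1 else 0) - if l = j then 1 else 0 with hd
  have hdi : d i = 1 := by simp [hd, hij]
  have hdj : d j = -1 := by simp [hd, hij.symm]
  have hdl : ∀ l, l ≠ i → l ≠ j → d l = 0 := fun l hli hlj => by simp [hd, hli, hlj]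
  have hsub : freeCoords a b (fun l => y l + t * d l) ⊆ freeCoords a b y := fun l hl => by
    simp only [freeCoords, mem_filter, mem_univ, true_and] at hl ⊢
    by_cases hli : l = i
    · rw [hli]; exact hi
    by_cases hlj : l = j
    · rw [hlj]; exact hj
    · simpa [hdl l hli hlj] using hl
  refine ⟨fun l => y l + t * d l, fun l => ?_, ?_, ?_, (ssubset_iff_of_subset hsub).2 ?_⟩
  · show y l + t * d l ∈ _
    by_cases hli : l = i
    · rw [hli, hdi]; constructor <;> linarith
    by_cases hlj : l = j
    · rw [hlj, hdj]; constructor <;> linarith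
    · rw [hdl l hli hlj, mul_zero, add_zero]; exact hy l
  · simp [hd, sum_add_distrib, ← mul_sum, sum_sub_distrib]
  · simp only [mul_add, sum_add_distrib, hd, mul_sub, mul_ite, mul_one, mul_zero, sum_sub_distrib,
      sum_ite_eq', mem_univ, if_true]
    linarith
  · simp only [freeCoords, mem_filter, mem_univ, true_and]
    simp only [mem_insert, mem_singleton] at hl
    rcases hl with rfl | rfl | rfl | rfl <;> dsimp only at htight
    · exact ⟨i, hi, fun h => h.1 (by rw [hdi]; linarith)⟩
    · exact ⟨i, hi, fun h => h.2 (by rw [hdi]; linarith)⟩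
    · exact ⟨j, hj, fun h => h.1 (by rw [hdj]; linarith)⟩
    · exact ⟨j, hj, fun h => h.2 (by rw [hdj]; linarith)⟩

theorem exists_le_with_one_free_coord [Nonempty ι] (c a b y : ι → ℝ)
    (hy : ∀ i, y i ∈ Set.Icc (a i) (b i)) :
    ∃ y' : ι → ℝ, (∀ i, y' i ∈ Set.Icc (a i) (b i)) ∧ ∑ i, y' i = ∑ i, y i ∧
      ∑ i, c i * y' i ≤ ∑ i, c i * y i ∧ ∃ j, ∀ i ≠ j, y' i = a i ∨ y' i = b i := by
  induction hN : (freeCoords a b y).card using Nat.strong_induction_on generalizing y with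
  | _ N ih =>
  rcases le_or_gt N 1 with h | h
  · obtain ⟨j, hj⟩ := card_le_one_iff_subset_singleton.1 (hN ▸ h)
    refine ⟨y, hy, rfl, le_rfl, j, fun i hij => ?_⟩
    by_contra hfree
    have hi : i ∈ freeCoords a b y := by simpa [freeCoords, not_or] using hfree
    exact hij (mem_singleton.1 (hj hi))
  · obtain ⟨i, hi, j, hj, hij⟩ := one_lt_card.1 (hN ▸ h)
    obtain ⟨y₁, hy₁, hs₁, hc₁, hlt⟩ := exists_transfer_le c a b y hy hij hi hj
    obtain ⟨y', hy', hs', hc', hfin⟩ := ih _ (hN ▸ card_lt_card hlt) y₁ hy₁ rfl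
    exact ⟨y', hy', hs'.trans hs₁, hc'.trans hc₁, hfin⟩

end Box

lemma min_add_max_sub (m π : ℝ) : min m π + max (m - π) 0 = m := by
  rcases le_total m π with h | h
  · rw [min_eq_left h, max_eq_right (by linarith)]; ring
  · rw [min_eq_right h, max_eq_left (by linarith)]; ring

def levelCost (cl cu π m : ℝ) : ℝ := cl * min m π + cu * max (m - π) 0

section LevelCost

variable {cl cu π m : ℝ}

lemma levelCost_of_le (h : m ≤ π) : levelCost cl cu π m = cl * m := by
  simp [levelCost, min_eq_left h, max_eq_right (sub_nonpos.2 h)]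

lemma levelCost_of_ge (h : π ≤ m) : levelCost cl cu π m = cl * π + cu * (m - π) := by
  simp [levelCost, min_eq_right h, max_eq_left (sub_nonneg.2 h)]

lemma levelCost_add_le {u v : ℝ} (hc : cl ≤ cu) (hu : u ≤ π) (hv : 0 ≤ v) :
    levelCost cl cu π (u + v) ≤ cl * u + cu * v := by
  rcases le_total (u + v) π with h | h
  · rw [levelCost_of_le h]; nlinarith
  · rw [levelCost_of_ge h]; nlinarith

end LevelCost

lemma sum_eq_card_filter_of_binary {ι : Type*} (s : Finset ι) (v : ι → ℝ)
    (hv : ∀ i ∈ s, v i = 0 ∨ v i = 1) : ∑ i ∈ s, v i = #(s.filter (v · = 1)) := by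
  rw [card_filter, Nat.cast_sum]
  refine sum_congr rfl fun i hi => ?_
  rcases hv i hi with h | h <;> simp [h]

section Levels

variable {ι : Type*} [Fintype ι]

structure LevelFeas (p : ℕ) (x m : ι → ℝ) (π : ℝ) : Prop where
  binary : ∀ i, x i = 0 ∨ x i = 1
  pi_mem : π ∈ Set.Icc (0 : ℝ) 1
  nonneg : ∀ i, 0 ≤ m i
  add_le_one : ∀ i, x i + m i ≤ 1
  sum_eq : ∑ i, (x i + m i) = p

structure IsLevelVertex (m : ι → ℝ) (π : ℝ) : Prop where
  breakpoint : ∀ i, m i = 0 ∨ m i = π ∨ m i = 1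
  pinned : π = 0 ∨ π = 1 ∨ ∃ i, m i = π

def levelObj (C cl cu : ι → ℝ) (Γ : ℝ) (x m : ι → ℝ) (π : ℝ) : ℝ :=
  ∑ i, C i * x i + ∑ i, levelCost (cl i) (cu i) π (m i) + Γ * π

theorem levelObj_path_affine (C cl cu : ι → ℝ) (Γ : ℝ) (x m d : ι → ℝ) (π : ℝ) :
    ∃ β, ∀ t, (∀ i, (m i ≤ π → m i + (t - π) * d i ≤ t) ∧ (π < m i → t ≤ m i + (t - π) * d i)) →
      levelObj C cl cu Γ x (fun i => m i + (t - π) * d i) t =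
        levelObj C cl cu Γ x m π + β * (t - π) := by
  set g : ι → ℝ → ℝ := fun i t => if m i ≤ π then cl i * (m i + (t - π) * d i)
    else cl i * t + cu i * (m i + (t - π) * d i - t)
  set s : ι → ℝ := fun i => if m i ≤ π then cl i * d i else cl i + cu i * (d i - 1)
  have hg : ∀ t, (∀ i, (m i ≤ π → m i + (t - π) * d i ≤ t) ∧ (π < m i → t ≤ m i + (t - π) * d i)) →
      levelObj C cl cu Γ x (fun i => m i + (t - π) * d i) t =
        ∑ i, C i * x i + ∑ i, g i t + Γ * t := fun t ht => by
    refine congrArg (· + _) (congrArg (_ + ·) (sum_congr rfl fun i _ => ?_))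
    by_cases h : m i ≤ π
    · simp only [g, h, if_true, levelCost_of_le ((ht i).1 h)]
    · simp only [g, h, if_false, levelCost_of_ge ((ht i).2 (not_le.1 h))]
  have hg_lin : ∀ i t, g i t = g i π + (t - π) * s i := fun i t => by
    by_cases h : m i ≤ π <;> simp only [g, s, h, if_true, if_false] <;> ring
  have h₀ := hg π fun i => ⟨fun h => by simpa using h, fun h => by simpa using h.le⟩
  simp only [sub_self, zero_mul, add_zero] at h₀
  refine ⟨∑ i, s i + Γ, fun t ht => ?_⟩
  rw [hg t ht, h₀]
  simp only [hg_lin _ t, sum_add_distrib, ← mul_sum]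
  ring

section Slide

variable [DecidableEq ι]

def slideDir (m : ι → ℝ) (π : ℝ) (j : ι) : ι → ℝ := fun i =>
  if i = j then -(#((univ.erase j).filter (m · = π)) : ℝ) else if m i = π then 1 else 0

def slide (m : ι → ℝ) (π : ℝ) (j : ι) (t : ℝ) : ι → ℝ := fun i =>
  m i + (t - π) * slideDir m π j i

lemma sum_slideDir (m : ι → ℝ) (π : ℝ) (j : ι) : ∑ i, slideDir m π j i = 0 := by
  rw [← add_sum_erase _ _ (mem_univ j)]
  simp only [slideDir]
  rw [sum_congr rfl fun i hi => if_neg (ne_of_mem_erase hi), sum_boole]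
  simp

lemma slide_of_ne {m : ι → ℝ} {π : ℝ} {i j : ι} (hi : i ≠ j) (t : ℝ) :
    slide m π j t i = if m i = π then t else m i := by
  by_cases h : m i = π <;> simp [slide, slideDir, hi, h]

lemma exists_slide_eq_of_slideDir_ne {m : ι → ℝ} {π : ℝ} {j : ι} (h : slideDir m π j j ≠ 0)
    (t : ℝ) : ∃ i, slide m π j t i = t := by
  have hne : ((univ.erase j).filter (m · = π)).Nonempty := by
    rw [← card_ne_zero]
    intro h₀
    exact h (by simp [slideDir, h₀])
  obtain ⟨i, hi⟩ := hne
  obtain ⟨hij, hmi⟩ := mem_filter.1 hi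
  exact ⟨i, by rw [slide_of_ne (ne_of_mem_erase hij), if_pos hmi]⟩

lemma slide_keeps_side {m : ι → ℝ} {π t : ℝ} {j : ι} (hπ₀ : 0 < π) (hπ₁ : π < 1)
    (hj : ∀ i ≠ j, m i = 0 ∨ m i = π ∨ m i = 1) (ht : t ∈ Set.Icc (0 : ℝ) 1)
    (hside : (m j ≤ π → slide m π j t j ≤ t) ∧ (π < m j → t ≤ slide m π j t j)) (i : ι) :
    (m i ≤ π → slide m π j t i ≤ t) ∧ (π < m i → t ≤ slide m π j t i) := by
  by_cases hi : i = j
  · rwa [hi]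
  rw [slide_of_ne hi]
  rcases hj i hi with h | h | h <;> rw [h]
  · rw [if_neg hπ₀.ne]; exact ⟨fun _ => ht.1, fun h' => absurd h' (not_lt.2 hπ₀.le)⟩
  · rw [if_pos rfl]; exact ⟨fun _ => le_rfl, fun h' => absurd h' (lt_irrefl _)⟩
  · rw [if_neg hπ₁.ne']; exact ⟨fun h' => absurd h' (not_le.2 hπ₁), fun _ => ht.2⟩

end Slide

namespace LevelFeas

variable {p : ℕ} {x m : ι → ℝ} {π : ℝ}

lemma le_one (hf : LevelFeas p x m π) (i : ι) : m i ≤ 1 := by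
  rcases hf.binary i with h | h <;> linarith [hf.add_le_one i, hf.nonneg i]

lemma eq_zero_of_pos (hf : LevelFeas p x m π) {i : ι} (hi : 0 < m i) : x i = 0 := by
  rcases hf.binary i with h | h
  · exact h
  · linarith [hf.add_le_one i]

theorem isLevelVertex_of_endpoint (hf : LevelFeas p x m π) (hπ : π = 0 ∨ π = 1) {j : ι}
    (hj : ∀ i ≠ j, m i = 0 ∨ m i = π ∨ m i = 1) : IsLevelVertex m π := by
  classical
  have hbin : ∀ i ≠ j, m i = 0 ∨ m i = 1 := fun i hi => by
    rcases hπ with rfl | rfl <;> simpa [or_comm, or_self] using hj i hi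
  have hsum := hf.sum_eq
  rw [← add_sum_erase _ _ (mem_univ j), sum_add_distrib,
    sum_eq_card_filter_of_binary _ x fun i _ => hf.binary i,
    sum_eq_card_filter_of_binary _ m fun i hi => hbin i (ne_of_mem_erase hi)] at hsum
  obtain ⟨A, B, hsum⟩ : ∃ A B : ℕ, x j + m j + (A + B) = p := ⟨_, _, hsum⟩
  have hxj : x j + m j = 0 ∨ x j + m j = 1 := by
    obtain ⟨N, hN⟩ : ∃ N : ℤ, x j + m j = N := ⟨p - A - B, by push_cast; linarith⟩
    have h₀ : (0 : ℝ) ≤ N :=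
      hN ▸ add_nonneg (by rcases hf.binary j with h | h <;> simp [h]) (hf.nonneg j)
    have h₁ : (N : ℝ) ≤ 1 := hN ▸ hf.add_le_one j
    have : N = 0 ∨ N = 1 := by
      have : 0 ≤ N := by exact_mod_cast h₀
      have : N ≤ 1 := by exact_mod_cast h₁
      omega
    rw [hN]
    rcases this with rfl | rfl <;> simp
  have hmj : m j = 0 ∨ m j = 1 := by
    rcases hf.binary j with hx | hx <;> rw [hx] at hxj
    · simpa using hxj
    · left; rcases hxj with h | h <;> linarith [hf.nonneg j]
  refine ⟨fun i => ?_, hπ.elim Or.inl (Or.inr ∘ Or.inl)⟩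
  by_cases hi : i = j
  · rw [hi]; tauto
  · exact hj i hi

theorem exists_ratio [Nonempty ι] (hf : LevelFeas p x m π) (hv : IsLevelVertex m π)
    (hp : 1 ≤ p) : ∃ q r : ℕ, q ≤ p ∧ 1 ≤ r ∧ r ≤ Fintype.card ι ∧ π = q / r := by
  classical
  by_cases h0 : π = 0
  · exact ⟨0, 1, Nat.zero_le _, le_rfl, Fintype.card_pos, by simp [h0]⟩
  by_cases h1 : π = 1
  · exact ⟨1, 1, hp, le_rfl, Fintype.card_pos, by simp [h1]⟩
  obtain ⟨i₀, hi₀⟩ := (hv.pinned.resolve_left h0).resolve_left h1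
  have hsplit : ∀ i, m i = (if m i = 1 then 1 else 0) + π * (if m i = π then 1 else 0) :=
    fun i => by rcases hv.breakpoint i with h | h | h <;> simp [h, h1, Ne.symm h0, Ne.symm h1]
  have hsum := hf.sum_eq
  rw [sum_add_distrib, sum_eq_card_filter_of_binary _ x fun i _ => hf.binary i,
    sum_congr rfl fun i _ => hsplit i, sum_add_distrib, ← mul_sum, sum_boole, sum_boole] at hsum
  set r := #(univ.filter (m · = π))
  have hr : 1 ≤ r := card_pos.2 ⟨i₀, mem_filter.2 ⟨mem_univ _, hi₀⟩⟩
  obtain ⟨a, b, hsum⟩ : ∃ a b : ℕ, (a : ℝ) + (b + π * r) = p := ⟨_, _, hsum⟩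
  have hab : a + b ≤ p := by
    have : ((a + b : ℕ) : ℝ) ≤ p := by push_cast; nlinarith [hf.pi_mem.1]
    exact_mod_cast this
  refine ⟨p - (a + b), r, Nat.sub_le _ _, hr, card_le_univ _, ?_⟩
  rw [eq_div_iff (Nat.cast_ne_zero.2 (by omega)), Nat.cast_sub hab]
  push_cast
  linarith

theorem exists_one_free_le [Nonempty ι] (hf : LevelFeas p x m π) (C cl cu : ι → ℝ) (Γ : ℝ) :
    ∃ m', LevelFeas p x m' π ∧ levelObj C cl cu Γ x m' π ≤ levelObj C cl cu Γ x m π ∧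
      ∃ j, ∀ i ≠ j, m' i = 0 ∨ m' i = π ∨ m' i = 1 := by
  -- the piece of `levelCost` containing `m i`, on which it is affine with slope `c i`
  set a : ι → ℝ := fun i => if m i ≤ π then 0 else π
  set b : ι → ℝ := fun i => if m i ≤ π then min π (1 - x i) else 1 - x i
  set c : ι → ℝ := fun i => if m i ≤ π then cl i else cu i
  have hm : ∀ i, m i ∈ Set.Icc (a i) (b i) := fun i => by
    have := hf.add_le_one i
    by_cases h : m i ≤ π <;> simp only [a, b, h, if_true, if_false]
    · exact ⟨hf.nonneg i, le_min h (by linarith)⟩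
    · exact ⟨(not_le.1 h).le, by linarith⟩
  obtain ⟨m', hm', hsum, hcost, j, hj⟩ := exists_le_with_one_free_coord c a b m hm
  have hpiece : ∀ i, levelCost (cl i) (cu i) π (m' i) =
      levelCost (cl i) (cu i) π (m i) + c i * (m' i - m i) := fun i => by
    by_cases h : m i ≤ π
    · have : m' i ≤ π := (hm' i).2.trans (by simp [b, h])
      simp only [c, h, if_true, levelCost_of_le h, levelCost_of_le this]; ring
    · have : π ≤ m' i := by simpa [a, h] using (hm' i).1
      simp only [c, h, if_false, levelCost_of_ge (not_le.1 h).le, levelCost_of_ge this]; ring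
  refine ⟨m', ⟨hf.binary, hf.pi_mem, fun i => ?_, fun i => ?_, ?_⟩, ?_, j, fun i hi => ?_⟩
  · exact le_trans (by by_cases h : m i ≤ π <;> simp [a, h, hf.pi_mem.1]) (hm' i).1
  · have : b i ≤ 1 - x i := by by_cases h : m i ≤ π <;> simp [b, h]
    linarith [(hm' i).2]
  · rw [sum_add_distrib, hsum, ← sum_add_distrib, hf.sum_eq]
  · simp only [levelObj, hpiece, sum_add_distrib, mul_sub, sum_sub_distrib]
    linarith
  · have hπ := hf.pi_mem
    rcases hj i hi with h | h <;> rw [h] <;> rcases hf.binary i with hx | hx <;>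
      by_cases hmi : m i ≤ π <;> simp [a, b, hmi, hx, hπ.1, hπ.2]

theorem levelFeas_slide [DecidableEq ι] (hf : LevelFeas p x m π) (hπ : 0 < π) {j : ι} {t : ℝ}
    (ht : t ∈ Set.Icc (0 : ℝ) 1) (hj₀ : 0 ≤ slide m π j t j) (hj₁ : x j + slide m π j t j ≤ 1) :
    LevelFeas p x (slide m π j t) t := by
  refine ⟨hf.binary, ht, fun i => ?_, fun i => ?_, ?_⟩
  · by_cases hi : i = j
    · rwa [hi]
    · rw [slide_of_ne hi]; split_ifs
      exacts [ht.1, hf.nonneg i]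
  · by_cases hi : i = j
    · rwa [hi]
    · rw [slide_of_ne hi]; split_ifs with h
      · rw [hf.eq_zero_of_pos (h ▸ hπ), zero_add]; exact ht.2
      · exact hf.add_le_one i
  · simp only [slide, sum_add_distrib, ← mul_sum, sum_slideDir, mul_zero, add_zero]
    rw [← sum_add_distrib, hf.sum_eq]

theorem exists_slide_le [DecidableEq ι] (hf : LevelFeas p x m π) (hπ₀ : 0 < π) (hπ₁ : π < 1)
    {j : ι} (hj : ∀ i ≠ j, m i = 0 ∨ m i = π ∨ m i = 1) (C cl cu : ι → ℝ) (Γ : ℝ) :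
    ∃ t, LevelFeas p x (slide m π j t) t ∧
      levelObj C cl cu Γ x (slide m π j t) t ≤ levelObj C cl cu Γ x m π ∧
      (t = 0 ∨ t = 1 ∨ slide m π j t j = t ∨
        slideDir m π j j ≠ 0 ∧ (slide m π j t j = 0 ∨ slide m π j t j = 1 - x j)) := by
  set d := slideDir m π j j
  set K := m j - π * d
  have hslide_j : ∀ t, slide m π j t j = K + d * t := fun t => by simp only [slide, K, d]; ring
  -- the last constraint keeps `m j` on its side of the moving `π`
  set σ : ℝ := if m j ≤ π then 1 else -1
  obtain ⟨β, hβ⟩ := levelObj_path_affine C cl cu Γ x m (slideDir m π j) π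
  obtain ⟨t, hL, hβt, l, hl, hl₂, htight⟩ := exists_tight_of_affine
    {(0, 1), (1, -1), (K, d), (1 - x j - K, -d), (-(σ * K), σ * (1 - d))} (t₀ := π) β
    (by
      simp only [mem_insert, mem_singleton, forall_eq_or_imp, forall_eq]
      refine ⟨by linarith, by linarith, by linarith [hf.nonneg j], by linarith [hf.add_le_one j],
        ?_⟩
      by_cases h : m j ≤ π <;> simp only [σ, K, h, if_true, if_false] <;> linarith)
    ⟨(0, 1), by simp, one_pos⟩ ⟨(1, -1), by simp, by norm_num⟩
  simp only [mem_insert, mem_singleton, forall_eq_or_imp, forall_eq] at hL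
  obtain ⟨ht₀, ht₁, hj₀, hj₁, hside⟩ := hL
  have hside_j : (m j ≤ π → slide m π j t j ≤ t) ∧ (π < m j → t ≤ slide m π j t j) := by
    rw [hslide_j]
    by_cases h : m j ≤ π <;> simp only [σ, h, if_true, if_false] at hside
    · exact ⟨fun _ => by linarith, fun h' => absurd h (not_le.2 h')⟩
    · exact ⟨fun h' => absurd h' h, fun _ => by linarith⟩
  have hsides := slide_keeps_side hπ₀ hπ₁ hj ⟨by linarith, by linarith⟩ hside_j
  refine ⟨t, hf.levelFeas_slide hπ₀ ⟨by linarith, by linarith⟩ (by rw [hslide_j]; linarith)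
    (by rw [hslide_j]; linarith), (hβ t hsides).le.trans (by linarith), ?_⟩
  simp only [mem_insert, mem_singleton] at hl
  rcases hl with rfl | rfl | rfl | rfl | rfl <;> dsimp only at hl₂ htight
  · left; linarith
  · right; left; linarith
  · exact Or.inr (Or.inr (Or.inr ⟨hl₂, Or.inl (by rw [hslide_j]; linarith)⟩))
  · exact Or.inr (Or.inr (Or.inr ⟨neg_ne_zero.1 hl₂, Or.inr (by rw [hslide_j]; linarith)⟩))
  · have hσ : σ ≠ 0 := by by_cases h : m j ≤ π <;> simp [σ, h]
    have : σ * (t - slide m π j t j) = 0 := by rw [hslide_j]; linarith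
    exact Or.inr (Or.inr (Or.inl (by linarith [(mul_eq_zero.1 this).resolve_left hσ])))

theorem exists_vertex_of_one_free (hf : LevelFeas p x m π) {j : ι}
    (hj : ∀ i ≠ j, m i = 0 ∨ m i = π ∨ m i = 1) (C cl cu : ι → ℝ) (Γ : ℝ) :
    ∃ m' π', LevelFeas p x m' π' ∧ IsLevelVertex m' π' ∧
      levelObj C cl cu Γ x m' π' ≤ levelObj C cl cu Γ x m π := by
  classical
  by_cases hπ : π = 0 ∨ π = 1
  · exact ⟨m, π, hf, hf.isLevelVertex_of_endpoint hπ hj, le_rfl⟩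
  have hπ₀ : 0 < π := lt_of_le_of_ne hf.pi_mem.1 fun h => hπ (Or.inl h.symm)
  have hπ₁ : π < 1 := lt_of_le_of_ne hf.pi_mem.2 fun h => hπ (Or.inr h)
  obtain ⟨t, hft, hcost, hstop⟩ := hf.exists_slide_le hπ₀ hπ₁ hj C cl cu Γ
  refine ⟨slide m π j t, t, hft, ?_, hcost⟩
  have hbreak : ∀ i ≠ j, slide m π j t i = 0 ∨ slide m π j t i = t ∨ slide m π j t i = 1 := by
    intro i hi
    rw [slide_of_ne hi]
    split_ifs
    · exact Or.inr (Or.inl rfl)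
    · rcases hj i hi with h | h | h <;> simp_all
  have hvertex : (slide m π j t j = 0 ∨ slide m π j t j = t ∨ slide m π j t j = 1) →
      (∃ i, slide m π j t i = t) → IsLevelVertex (slide m π j t) t := fun hj' hpin =>
    ⟨fun i => if hi : i = j then hi ▸ hj' else hbreak i hi, Or.inr (Or.inr hpin)⟩
  rcases hstop with h | h | h | ⟨hd, h⟩
  · exact hft.isLevelVertex_of_endpoint (Or.inl h) hbreak
  · exact hft.isLevelVertex_of_endpoint (Or.inr h) hbreak
  · exact hvertex (Or.inr (Or.inl h)) ⟨j, h⟩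
  · refine hvertex ?_ (exists_slide_eq_of_slideDir_ne hd t)
    rcases hf.binary j with hx | hx <;> rw [hx] at h <;> norm_num at h <;> tauto

theorem exists_vertex_le [Nonempty ι] (hf : LevelFeas p x m π) (C cl cu : ι → ℝ) (Γ : ℝ) :
    ∃ m' π', LevelFeas p x m' π' ∧ IsLevelVertex m' π' ∧
      levelObj C cl cu Γ x m' π' ≤ levelObj C cl cu Γ x m π := by
  obtain ⟨m₁, hf₁, hle₁, j, hj⟩ := hf.exists_one_free_le C cl cu Γ
  obtain ⟨m', π', hf', hv, hle⟩ := hf₁.exists_vertex_of_one_free hj C cl cu Γ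
  exact ⟨m', π', hf', hv, hle.trans hle₁⟩

end LevelFeas

end Levels

-- At `π = 0` (resp. `π = 1`) the division by zero returns `0`, which is the right value.
def lowerPart (π m : ℝ) : ℝ := min m π / π

def upperPart (π m : ℝ) : ℝ := max (m - π) 0 / (1 - π)

section Parts

variable {π m : ℝ}

lemma mul_lowerPart (hm : 0 ≤ m) : π * lowerPart π m = min m π :=
  mul_div_cancel_of_imp' fun h => by simp [h, hm]

lemma mul_upperPart (hm : m ≤ 1) : (1 - π) * upperPart π m = max (m - π) 0 :=
  mul_div_cancel_of_imp' fun h => by simp [show π = 1 by linarith, hm]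

lemma lowerPart_mem_Icc (hm : 0 ≤ m) (hπ : 0 ≤ π) : lowerPart π m ∈ Set.Icc (0 : ℝ) 1 :=
  ⟨div_nonneg (le_min hm hπ) hπ, div_le_one_of_le₀ (min_le_right _ _) hπ⟩

lemma upperPart_mem_Icc (hm : m ≤ 1) (hπ : π ≤ 1) : upperPart π m ∈ Set.Icc (0 : ℝ) 1 :=
  ⟨div_nonneg (le_max_right _ _) (by linarith),
    div_le_one_of_le₀ (max_le (by linarith) (by linarith)) (by linarith)⟩

lemma lowerPart_zero (hπ : 0 ≤ π) : lowerPart π 0 = 0 := by simp [lowerPart, hπ]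

lemma upperPart_zero (hπ : 0 ≤ π) : upperPart π 0 = 0 := by simp [upperPart, hπ]

lemma div_self_eq_zero_or_one (a : ℝ) : a / a = 0 ∨ a / a = 1 := by
  rcases eq_or_ne a 0 with h | h
  · simp [h]
  · simp [h]

lemma lowerPart_binary (hπ : π ∈ Set.Icc (0 : ℝ) 1) (hm : m = 0 ∨ m = π ∨ m = 1) :
    lowerPart π m = 0 ∨ lowerPart π m = 1 := by
  rcases hm with h | h | h <;> rw [h]
  · simp [lowerPart_zero hπ.1]
  · simpa [lowerPart] using div_self_eq_zero_or_one π
  · simpa [lowerPart, min_eq_right hπ.2] using div_self_eq_zero_or_one π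

lemma upperPart_binary (hπ : π ∈ Set.Icc (0 : ℝ) 1) (hm : m = 0 ∨ m = π ∨ m = 1) :
    upperPart π m = 0 ∨ upperPart π m = 1 := by
  rcases hm with h | h | h <;> rw [h]
  · simp [upperPart_zero hπ.1]
  · simp [upperPart]
  · simpa [upperPart, max_eq_left (sub_nonneg.2 hπ.2)] using div_self_eq_zero_or_one (1 - π)

end Parts

section Bridge

variable {n p : ℕ} {x z zb m : Fin n → ℝ} {π : ℝ}

theorem Feas10.levelFeas (h : Feas10 n p x z zb π) :
    LevelFeas p x (fun i => π * z i + (1 - π) * zb i) π := by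
  obtain ⟨hx, hz, hzb, hπ, hsum, hxz, hxzb⟩ := h
  have hπ' : 0 ≤ 1 - π := sub_nonneg.2 hπ.2
  refine ⟨hx, hπ, fun i => add_nonneg (mul_nonneg hπ.1 (hz i).1) (mul_nonneg hπ' (hzb i).1),
    fun i => ?_, by rw [← hsum]; exact sum_congr rfl fun i _ => by ring⟩
  nlinarith [mul_le_mul_of_nonneg_left (hxz i) hπ.1, mul_le_mul_of_nonneg_left (hxzb i) hπ']

theorem levelObj_le_obj10 (C cl cu : Fin n → ℝ) (hcu : ∀ i, cl i ≤ cu i) (Γ : ℝ)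
    (h : Feas10 n p x z zb π) :
    levelObj C cl cu Γ x (fun i => π * z i + (1 - π) * zb i) π ≤ Obj10 n C cl cu Γ x z zb π := by
  obtain ⟨-, hz, hzb, hπ, -⟩ := h
  calc levelObj C cl cu Γ x (fun i => π * z i + (1 - π) * zb i) π
      ≤ ∑ i, C i * x i + ∑ i, (cl i * (π * z i) + cu i * ((1 - π) * zb i)) + Γ * π := by
        unfold levelObj
        gcongr with i
        exact levelCost_add_le (hcu i) (mul_le_of_le_one_right hπ.1 (hz i).2)
          (mul_nonneg (sub_nonneg.2 hπ.2) (hzb i).1)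
    _ = Obj10 n C cl cu Γ x z zb π := by
        have hl : ∑ i, cl i * (π * z i) = π * ∑ i, cl i * z i := by
          rw [mul_sum]; exact sum_congr rfl fun i _ => by ring
        have hu : ∑ i, cu i * ((1 - π) * zb i) = (1 - π) * ∑ i, cu i * zb i := by
          rw [mul_sum]; exact sum_congr rfl fun i _ => by ring
        rw [sum_add_distrib, hl, hu, Obj10]
        ring

theorem LevelFeas.feas10 (hf : LevelFeas p x m π) :
    Feas10 n p x (fun i => lowerPart π (m i)) (fun i => upperPart π (m i)) π := by
  -- where `x i = 1` the level `m i` vanishes, and so do both parts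
  have hx : ∀ i, ∀ v ∈ Set.Icc (0 : ℝ) 1, (m i = 0 → v = 0) → x i + v ≤ 1 := fun i v hv h0 => by
    rcases hf.binary i with h | h
    · linarith [hv.2]
    · rw [h0 (by linarith [hf.add_le_one i, hf.nonneg i]), h]; norm_num
  have hlow := fun i => lowerPart_mem_Icc (hf.nonneg i) hf.pi_mem.1
  have hup := fun i => upperPart_mem_Icc (hf.le_one i) hf.pi_mem.2
  refine ⟨hf.binary, hlow, hup, hf.pi_mem, ?_,
    fun i => hx i _ (hlow i) fun h => by dsimp only; rw [h, lowerPart_zero hf.pi_mem.1],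
    fun i => hx i _ (hup i) fun h => by dsimp only; rw [h, upperPart_zero hf.pi_mem.1]⟩
  rw [← hf.sum_eq]
  refine sum_congr rfl fun i _ => ?_
  rw [add_assoc, mul_lowerPart (hf.nonneg i), mul_upperPart (hf.le_one i), min_add_max_sub]

theorem LevelFeas.obj10_eq (hf : LevelFeas p x m π) (C cl cu : Fin n → ℝ) (Γ : ℝ) :
    Obj10 n C cl cu Γ x (fun i => lowerPart π (m i)) (fun i => upperPart π (m i)) π =
      levelObj C cl cu Γ x m π := by
  simp only [Obj10, levelObj, levelCost, mul_sum, sum_add_distrib, mul_left_comm π,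
    mul_left_comm (1 - π), mul_lowerPart (hf.nonneg _), mul_upperPart (hf.le_one _), add_assoc]

end Bridge

def NiceFeas10 (n p : ℕ) (x z zb : Fin n → ℝ) (π : ℝ) : Prop :=
  Feas10 n p x z zb π ∧ (∀ i, z i = 0 ∨ z i = 1) ∧ (∀ i, zb i = 0 ∨ zb i = 1) ∧
    ∃ q r : ℕ, q ≤ p ∧ 1 ≤ r ∧ r ≤ n ∧ π = q / r

theorem Feas10.exists_niceFeas10_le {n p : ℕ} {x z zb : Fin n → ℝ} {π : ℝ}
    (h : Feas10 n p x z zb π) (hp : 1 ≤ p) (C cl cu : Fin n → ℝ) (hcu : ∀ i, cl i ≤ cu i)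
    (Γ : ℝ) : ∃ z' zb' π', NiceFeas10 n p x z' zb' π' ∧
      Obj10 n C cl cu Γ x z' zb' π' ≤ Obj10 n C cl cu Γ x z zb π := by
  have : Nonempty (Fin n) := by
    by_contra hn
    have hsum := h.2.2.2.2.1
    rw [not_nonempty_iff] at hn
    simp only [univ_eq_empty, sum_empty] at hsum
    have : p = 0 := by exact_mod_cast hsum.symm
    omega
  obtain ⟨m, π', hf, hv, hle⟩ := h.levelFeas.exists_vertex_le C cl cu Γ
  obtain ⟨q, r, hq, hr, hrn, hπ⟩ := hf.exists_ratio hv hp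
  refine ⟨_, _, π', ⟨hf.feas10, fun i => lowerPart_binary hf.pi_mem (hv.breakpoint i),
    fun i => upperPart_binary hf.pi_mem (hv.breakpoint i), q, r, hq, hr, by simpa using hrn, hπ⟩,
    ?_⟩
  rw [hf.obj10_eq]
  exact hle.trans (levelObj_le_obj10 C cl cu hcu Γ h)

theorem finite_setOf_niceFeas10 (n p : ℕ) :
    Set.Finite {t : (Fin n → ℝ) × (Fin n → ℝ) × (Fin n → ℝ) × ℝ |
      NiceFeas10 n p t.1 t.2.1 t.2.2.1 t.2.2.2} := by
  have hbin : {f : Fin n → ℝ | ∀ i, f i ∈ ({0, 1} : Set ℝ)}.Finite :=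
    Set.Finite.pi' fun _ => Set.toFinite _
  have hrat := (Set.finite_Iic p).image2 (fun q r : ℕ => (q : ℝ) / r) (Set.finite_Icc 1 n)
  refine (hbin.prod (hbin.prod (hbin.prod hrat))).subset ?_
  rintro ⟨x, z, zb, π⟩ ⟨hf, hz, hzb, q, r, hq, hr, hrn, rfl⟩
  exact ⟨hf.1, hz, hzb, q, hq, r, ⟨hr, hrn⟩, rfl⟩

theorem feas10_const {n p : ℕ} (hn : 0 < n) (hpn : p ≤ n) :
    Feas10 n p 0 0 (fun _ => (p : ℝ) / n) 0 := by
  have hn : (0 : ℝ) < n := by exact_mod_cast hn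
  have hle : (p : ℝ) / n ≤ 1 := div_le_one_of_le₀ (by exact_mod_cast hpn) hn.le
  refine ⟨fun _ => Or.inl rfl, fun _ => by simp, fun _ => ⟨by positivity, hle⟩, by simp, ?_,
    fun _ => by simp, fun _ => by simpa using hle⟩
  simp [mul_div_cancel₀ _ hn.ne']

theorem stmt10_general (n p : ℕ) (hp1 : 1 ≤ p) (hpn : p ≤ n)
    (C cl cu : Fin n → ℝ)
    (hcu : ∀ i, cl i ≤ cu i) (Γ : ℝ) :
    ∃ x z zb : Fin n → ℝ, ∃ π : ℝ, Feas10 n p x z zb π ∧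
      (∀ x' z' zb' : Fin n → ℝ, ∀ π' : ℝ, Feas10 n p x' z' zb' π' →
        Obj10 n C cl cu Γ x z zb π ≤ Obj10 n C cl cu Γ x' z' zb' π') ∧
      (∀ i, z i = 0 ∨ z i = 1) ∧ (∀ i, zb i = 0 ∨ zb i = 1) ∧
      (∃ q r : ℕ, q ≤ p ∧ 1 ≤ r ∧ r ≤ n ∧ π = (q : ℝ) / (r : ℝ)) := by
  obtain ⟨z₀, zb₀, π₀, hnice₀, -⟩ :=
    (feas10_const (by omega) hpn).exists_niceFeas10_le hp1 C cl cu hcu Γ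
  obtain ⟨⟨x, z, zb, π⟩, ⟨hf, hz, hzb, hπ⟩, hmin⟩ :=
    Set.exists_min_image _ (fun t => Obj10 n C cl cu Γ t.1 t.2.1 t.2.2.1 t.2.2.2)
      (finite_setOf_niceFeas10 n p) ⟨⟨0, z₀, zb₀, π₀⟩, hnice₀⟩
  refine ⟨x, z, zb, π, hf, fun x' z' zb' π' h' => ?_, hz, hzb, hπ⟩
  obtain ⟨z'', zb'', π'', hnice, hle⟩ := h'.exists_niceFeas10_le hp1 C cl cu hcu Γ
  exact (hmin ⟨x', z'', zb'', π''⟩ hnice).trans hle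

/-- Lemma 5: there is an optimal solution of (18) with integral `z`, `z̄` and
`π = q/r` for some `q ∈ {0,…,p}`, `r ∈ {1,…,n}`. -/
theorem stmt10 (n p : ℕ) (hp1 : 1 ≤ p) (hpn : p ≤ n)
    (C cl cu : Fin n → ℝ) (hC : ∀ i, 0 ≤ C i) (hcl : ∀ i, 0 ≤ cl i)
    (hcu : ∀ i, cl i ≤ cu i) (Γ : ℝ) (hΓ : 0 ≤ Γ) :
    ∃ x z zb : Fin n → ℝ, ∃ π : ℝ, Feas10 n p x z zb π ∧
      (∀ x' z' zb' : Fin n → ℝ, ∀ π' : ℝ, Feas10 n p x' z' zb' π' →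
        Obj10 n C cl cu Γ x z zb π ≤ Obj10 n C cl cu Γ x' z' zb' π') ∧
      (∀ i, z i = 0 ∨ z i = 1) ∧ (∀ i, zb i = 0 ∨ zb i = 1) ∧
      (∃ q r : ℕ, q ≤ p ∧ 1 ≤ r ∧ r ≤ n ∧ π = (q : ℝ) / (r : ℝ)) :=
  stmt10_general n p hp1 hpn C cl cu hcu Γ
end
end
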